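/- arXiv:2007.05789 — 4 statements merged into one kernel-verified Lean document; each statement's English description precedes it below -/
import Mathlib

section
/- Let P be a symmetric rendez-vous protocol in which, for every q ∈ Q_P, the underlying graph has a path from q_i to q and a path from q to q_f. Then there exists B ∈ ℕ such that C_i^(n) →* C_f^(n) for all n ≥ B if and only if both (q_i^L, γ_i^E) ⇝* (q_f^L, γ_f^E) and (q_i^L, γ_i^O) ⇝* (q_f^L, γ_f^O) hold in the even-odd abstraction. -/
/-- Actions labelling edges of a rendez-vous protocol: request (`recv`, written `?a`)
or answer (`send`, written `!a`). -/
inductive RVAct (A : Type) : Type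
  | send : A → RVAct A
  | recv : A → RVAct A

/-- A rendez-vous protocol: a finite set of states `Q` partitioned (via `isLeader`)
into process states and leader states, a finite alphabet `A`, initial/final states for
processes and for the leader, and a set of edges staying within each part. -/
structure RVProtocol (Q A : Type) : Type where
  isLeader : Q → Bool
  qi : Q
  qf : Q
  qiL : Q
  qfL : Q
  hqi : isLeader qi = false
  hqf : isLeader qf = false
  hqiL : isLeader qiL = true
  hqfL : isLeader qfL = true
  E : Set (Q × RVAct A × Q)
  hE : ∀ e ∈ E, isLeader e.1 = isLeader e.2.2

namespace RVProtocol

variable {Q A : Type} [DecidableEq Q] (P : RVProtocol Q A)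

/-- A configuration is a multiset of states with exactly one occurrence of a leader state. -/
def IsConfig (C : Multiset Q) : Prop :=
  (C.filter (fun q => P.isLeader q = true)).card = 1

/-- One rendez-vous step between configurations. -/
def Step (C C' : Multiset Q) : Prop :=
  ∃ (a : A) (q1 q2 q1' q2' : Q),
    (q1, RVAct.recv a, q2) ∈ P.E ∧ (q1', RVAct.send a, q2') ∈ P.E ∧
    0 < C.count q1 ∧ 0 < C.count q1' ∧ 2 ≤ C.count q1 + C.count q1' ∧
    C' = C - {q1, q1'} + {q2, q2'}

/-- Reachability: reflexive-transitive closure of `Step`. -/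
def Reach : Multiset Q → Multiset Q → Prop := Relation.ReflTransGen P.Step

/-- The initial configuration with `n` processes. -/
def Ci (n : ℕ) : Multiset Q := Multiset.replicate n P.qi + {P.qiL}

/-- The final configuration with `n` processes. -/
def Cf (n : ℕ) : Multiset Q := Multiset.replicate n P.qf + {P.qfL}

/-! The Petri net `N_P` associated to a protocol `P`: one place per state of `Q`
(markings are functions `Q → ℕ`), a transition `t_i` producing a token in `p_{q_i}`,
a transition `t_f^L` consuming a token from `p_{q_f^L}`, and for every pair of edges
`(q1,!a,q1')`, `(q2,?a,q2')` a transition with precondition `p_{q1} + p_{q2}` and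
postcondition `p_{q1'} + p_{q2'}`.  We describe it by its firing relation. -/
def NPStep (M M' : Q → ℕ) : Prop :=
  -- transition `t_i`
  (M' = M + Pi.single P.qi 1) ∨
  -- transition `t_f^L`
  (Pi.single P.qfL 1 ≤ M ∧ M' = M - Pi.single P.qfL 1) ∨
  -- rendez-vous transitions
  (∃ (a : A) (q1 q2 q1' q2' : Q),
    (q1, RVAct.send a, q1') ∈ P.E ∧ (q2, RVAct.recv a, q2') ∈ P.E ∧
    Pi.single q1 1 + Pi.single q2 1 ≤ M ∧
    M' = M - (Pi.single q1 1 + Pi.single q2 1) + (Pi.single q1' 1 + Pi.single q2' 1))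

/-- Reachability in the Petri net `N_P`. -/
def NPReach : (Q → ℕ) → (Q → ℕ) → Prop := Relation.ReflTransGen P.NPStep

/-- The initial marking `M_0` of `N_P`: one token in `p_{q_i^L}`, none elsewhere. -/
def M0 : Q → ℕ := Pi.single P.qiL 1

/-- The marking `M_f^{(n)}`: `n` tokens in `p_{q_f}`, none elsewhere. -/
def Mf (n : ℕ) : Q → ℕ := Pi.single P.qf n

end RVProtocol


namespace RVProtocol

variable {Q A : Type} (P : RVProtocol Q A)

/-- A rendez-vous protocol is symmetric when `(q,!a,q') ∈ E` iff `(q,?a,q') ∈ E`;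
such an edge is then written `(q,a,q')`. -/
def IsSymmetric : Prop :=
  ∀ (q : Q) (a : A) (q' : Q), (q, RVAct.send a, q') ∈ P.E ↔ (q, RVAct.recv a, q') ∈ P.E

/-- The edge relation of the underlying graph of the protocol: there is an edge from
`q` to `q'` whenever `(q,a,q') ∈ E` for some letter `a`. -/
def Adj (q q' : Q) : Prop := ∃ a : A, (q, RVAct.send a, q') ∈ P.E

/-- Every process state is on a path from `q_i` to `q_f` in the underlying graph. -/
def Connected : Prop :=
  ∀ q : Q, P.isLeader q = false →
    Relation.ReflTransGen P.Adj P.qi q ∧ Relation.ReflTransGen P.Adj q P.qf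

end RVProtocol

/-- Flip the parity values (`false` = even `E`, `true` = odd `O`) of `γ` at `x1` and `x2`,
with no change at all if `x1 = x2`. -/
def flipTwo {X : Type} [DecidableEq X] (γ : X → Bool) (x1 x2 : X) : X → Bool :=
  if x1 = x2 then γ
  else fun x => if x = x1 ∨ x = x2 then !(γ x) else γ x

namespace RVProtocol

variable {Q A : Type} [DecidableEq Q] (P : RVProtocol Q A)

/-- The process states `Q_P` of the protocol. -/
abbrev ProcState : Type := {q : Q // P.isLeader q = false}

/-- The leader states `Q_L` of the protocol. -/
abbrev LeadState : Type := {q : Q // P.isLeader q = true}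

/-- Even-odd abstract configurations: a leader state together with a parity
(`false` = even `E`, `true` = odd `O`) for each process state. -/
abbrev AbsConf : Type := P.LeadState × (P.ProcState → Bool)

/-- One step of the even-odd abstraction: either the leader takes an edge together with
one process (case 1), or two processes perform a rendez-vous (case 2); the parities are
updated by flipping at the (distinct) endpoints of each edge used. -/
def EOStep (c1 c2 : P.AbsConf) : Prop :=
  (∃ (a : A) (q1 q2 : P.ProcState),
      ((c1.1 : Q), RVAct.send a, (c2.1 : Q)) ∈ P.E ∧
      ((q1 : Q), RVAct.send a, (q2 : Q)) ∈ P.E ∧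
      c2.2 = flipTwo c1.2 q1 q2) ∨
  (c1.1 = c2.1 ∧
    ∃ (a : A) (q1 q2 q3 q4 : P.ProcState),
      ((q1 : Q), RVAct.send a, (q2 : Q)) ∈ P.E ∧
      ((q3 : Q), RVAct.send a, (q4 : Q)) ∈ P.E ∧
      c2.2 = flipTwo (flipTwo c1.2 q1 q2) q3 q4)

/-- Reachability in the even-odd abstraction. -/
def EOReach : P.AbsConf → P.AbsConf → Prop := Relation.ReflTransGen P.EOStep

/-- The abstract configuration `(q_i^L, γ_i^E)`: all parities even. -/
def absIE : P.AbsConf := (⟨P.qiL, P.hqiL⟩, fun _ => false)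

/-- The abstract configuration `(q_f^L, γ_f^E)`: all parities even. -/
def absFE : P.AbsConf := (⟨P.qfL, P.hqfL⟩, fun _ => false)

/-- The abstract configuration `(q_i^L, γ_i^O)`: parity odd exactly at `q_i`. -/
def absIO : P.AbsConf := (⟨P.qiL, P.hqiL⟩, fun q => decide ((q : Q) = P.qi))

/-- The abstract configuration `(q_f^L, γ_f^O)`: parity odd exactly at `q_f`. -/
def absFO : P.AbsConf := (⟨P.qfL, P.hqfL⟩, fun q => decide ((q : Q) = P.qf))

/-- The concretization `[[(q^L, γ)]]` of an abstract configuration: configurations `C`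
with `C(q^L) = 1` and, for each process state `q`, `C(q)` even iff `γ(q) = E`. -/
def Interp (c : P.AbsConf) (C : Multiset Q) : Prop :=
  P.IsConfig C ∧ C.count (c.1 : Q) = 1 ∧
    ∀ q : P.ProcState, (Even (C.count (q : Q)) ↔ c.2 q = false)

end RVProtocol

/-! ### Auxiliary lemmas for the proof -/

lemma flip_parity {X : Type} [DecidableEq X] (γ : X → Bool) (a b x : X) :
    ((if flipTwo γ a b x then 1 else 0) : ℕ) % 2 =
      ((if γ x then 1 else 0) + (if x = a then 1 else 0) + (if x = b then 1 else 0)) % 2 := by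
  unfold flipTwo
  by_cases hab : a = b
  · subst hab
    simp only [eq_self_iff_true, if_true]
    by_cases hxa : x = a
    · subst hxa
      cases hγ : γ x <;> simp [hγ]
    · simp [hxa]
  · simp only [if_neg hab]
    by_cases hxa : x = a
    · subst hxa
      have hxb : ¬ x = b := hab
      cases hγ : γ x <;> simp [hγ, hxb]
    · by_cases hxb : x = b
      · subst hxb
        cases hγ : γ x <;> simp [hγ, hxa]
      · have hor : ¬ (x = a ∨ x = b) := by tauto
        simp [hor, hxa, hxb]

namespace RVProtocol

variable {Q A : Type} [DecidableEq Q] (P : RVProtocol Q A)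

lemma count_pair (x y r : Q) :
    ({x, y} : Multiset Q).count r = (if r = x then 1 else 0) + (if r = y then 1 else 0) := by
  rw [Multiset.insert_eq_cons, Multiset.count_cons, Multiset.count_singleton]
  exact Nat.add_comm _ _

lemma card_pair (x y : Q) : ({x, y} : Multiset Q).card = 2 := by
  simp [Multiset.insert_eq_cons]

lemma pair_le {C : Multiset Q} {x y : Q} (hx : 0 < C.count x) (hy : 0 < C.count y)
    (hxy : x = y → 2 ≤ C.count x) : ({x, y} : Multiset Q) ≤ C := by
  rw [Multiset.le_iff_count]
  intro r
  rw [count_pair]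
  by_cases h2 : x = y
  · subst h2
    by_cases h1 : r = x
    · subst h1
      have h4 := hxy rfl
      simp only [eq_self_iff_true, if_true]
      omega
    · simp [h1]
  · by_cases h1 : r = x
    · subst h1
      simp only [eq_self_iff_true, if_true, if_neg h2]
      omega
    · by_cases h3 : r = y
      · subst h3
        simp only [eq_self_iff_true, if_true, if_neg h1]
        omega
      · simp [h1, h3]

lemma count_move (C : Multiset Q) (x1 x2 y1 y2 r : Q) :
    (C - {x1, x2} + {y1, y2}).count r =
      C.count r - ((if r = x1 then 1 else 0) + (if r = x2 then 1 else 0))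
        + ((if r = y1 then 1 else 0) + (if r = y2 then 1 else 0)) := by
  rw [Multiset.count_add, Multiset.count_sub, count_pair, count_pair]

lemma card_move {C : Multiset Q} {x1 x2 : Q} (h : ({x1, x2} : Multiset Q) ≤ C) (y1 y2 : Q) :
    (C - {x1, x2} + {y1, y2}).card = C.card := by
  have h2 := Multiset.card_le_card h
  rw [Multiset.card_add, Multiset.card_sub h, card_pair, card_pair]
  rw [card_pair] at h2
  omega

lemma step_mk (hsym : P.IsSymmetric) {C : Multiset Q} {a : A} {x1 y1 x2 y2 : Q}
    (e1 : (x1, RVAct.send a, y1) ∈ P.E) (e2 : (x2, RVAct.send a, y2) ∈ P.E)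
    (h1 : 0 < C.count x1) (h2 : 0 < C.count x2) (h3 : 2 ≤ C.count x1 + C.count x2) :
    P.Step C (C - {x1, x2} + {y1, y2}) :=
  ⟨a, x1, y1, x2, y2, (hsym x1 a y1).1 e1, e2, h1, h2, h3, rfl⟩

lemma movePairReach (hsym : P.IsSymmetric) {q q' : Q} (hpath : Relation.ReflTransGen P.Adj q q') :
    ∀ C : Multiset Q, 2 ≤ C.count q → P.Reach C (C - {q, q} + {q', q'}) := by
  induction hpath using Relation.ReflTransGen.head_induction_on with
  | refl =>
    intro C hC
    have hle : ({q', q'} : Multiset Q) ≤ C := pair_le (by omega) (by omega) (fun _ => hC)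
    rw [tsub_add_cancel_of_le hle]
    exact Relation.ReflTransGen.refl
  | @head s t h' htail ih =>
    intro C hC
    obtain ⟨a, ha⟩ := h'
    have h1 : P.Step C (C - {s, s} + {t, t}) :=
      P.step_mk hsym ha ha (by omega) (by omega) (by omega)
    have h2 : 2 ≤ (C - {s, s} + {t, t}).count t := by
      rw [count_move]
      by_cases h : t = s
      · subst h
        simp only [eq_self_iff_true, if_true]
        omega
      · simp only [eq_self_iff_true, if_true, if_neg h]
        omega
    have ih' := ih (C - {s, s} + {t, t}) h2
    rw [show (C - {s, s} + {t, t}) - {t, t} = C - {s, s} from by simp] at ih'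
    exact Relation.ReflTransGen.head h1 ih'

/-- The count-based invariant tying an abstract configuration to a concrete one. -/
def MyInv (c : P.AbsConf) (C : Multiset Q) : Prop :=
  (∀ r, P.isLeader r = true → C.count r = if r = (c.1 : Q) then 1 else 0) ∧
  (∀ r (h : P.isLeader r = false), C.count r % 2 = if c.2 ⟨r, h⟩ then 1 else 0)

/-- Iterated abstract steps. -/
def StepN : ℕ → P.AbsConf → P.AbsConf → Prop
  | 0 => fun c c' => c = c'
  | (n+1) => fun c c' => ∃ d, P.EOStep c d ∧ StepN n d c'

lemma eoReach_stepN {c c' : P.AbsConf} (h : P.EOReach c c') : ∃ n, P.StepN n c c' := by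
  induction h using Relation.ReflTransGen.head_induction_on with
  | refl => exact ⟨0, rfl⟩
  | @head s t hstep htail ih =>
    obtain ⟨n, hn⟩ := ih
    exact ⟨n + 1, t, hstep, hn⟩

lemma step_card_mono {C C' : Multiset Q} (h : P.Step C C') : C.card ≤ C'.card := by
  obtain ⟨a, q1, q2, q1', q2', _, _, _, _, _, rfl⟩ := h
  have h1 : C ≤ C - {q1, q1'} + {q1, q1'} := le_tsub_add
  have h2 := Multiset.card_le_card h1
  rw [Multiset.card_add, card_pair] at h2
  rw [Multiset.card_add, card_pair]
  omega

lemma reach_card_mono {C C' : Multiset Q} (h : P.Reach C C') : C.card ≤ C'.card := by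
  induction h with
  | refl => exact le_refl _
  | tail _ hstep ih => exact le_trans ih (P.step_card_mono hstep)

lemma neq_of_flags {r s : Q} (hr : P.isLeader r = false) (hs : P.isLeader s = true) : r ≠ s := by
  intro h
  rw [h, hs] at hr
  simp at hr

lemma ind_self (x : Q) : (if x = x then (1:ℕ) else 0) = 1 := if_pos rfl

lemma ite_subtype {X : Type} [DecidableEq X] {p : X → Prop} (a : {x // p x}) (r : X) (h : p r) :
    (if (⟨r, h⟩ : {x // p x}) = a then (1:ℕ) else 0) = if r = (a : X) then 1 else 0 :=
  if_congr (by simp [Subtype.ext_iff]) rfl rfl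

set_option maxHeartbeats 2000000 in
lemma stepLift (hsym : P.IsSymmetric) (hconn : P.Connected) {c1 c2 : P.AbsConf}
    (hst : P.EOStep c1 c2) {C : Multiset Q} (hinv : P.MyInv c1 C) (hqi : 6 ≤ C.count P.qi) :
    ∃ C', P.Reach C C' ∧ P.MyInv c2 C' ∧ C.count P.qi ≤ C'.count P.qi + 6 ∧
      C'.card = C.card := by
  rcases hst with ⟨a, p1, p2, heL, heP, hflip⟩ | ⟨hLeq, a, p1, p2, p3, p4, he1, he2, hflip⟩
  · -- leader + process step
    have hpath := (hconn (p1 : Q) p1.2).1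
    have hreach1 : P.Reach C (C - {P.qi, P.qi} + {(p1 : Q), (p1 : Q)}) :=
      P.movePairReach hsym hpath C (by omega)
    have hqile : ({P.qi, P.qi} : Multiset Q) ≤ C := pair_le (by omega) (by omega) (fun _ => by omega)
    set C1 := C - {P.qi, P.qi} + {(p1 : Q), (p1 : Q)} with hC1
    have hcx : 2 ≤ C1.count (p1 : Q) := by
      rw [hC1, count_move, ind_self]
      by_cases h : (p1 : Q) = P.qi
      · have h6 : 6 ≤ C.count (p1 : Q) := by rw [h]; exact hqi
        omega
      · rw [if_neg h]
        omega
    have hcL : ∀ r, P.isLeader r = true → C1.count r = C.count r := by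
      intro r hr
      rw [hC1, count_move, if_neg (Ne.symm (P.neq_of_flags P.hqi hr)),
        if_neg (Ne.symm (P.neq_of_flags p1.2 hr))]
      omega
    have hcL1 : C1.count ((c1.1 : Q)) = 1 := by
      rw [hcL _ c1.1.2, hinv.1 _ c1.1.2, ind_self]
    have hstep : P.Step C1 (C1 - {(c1.1 : Q), (p1 : Q)} + {(c2.1 : Q), (p2 : Q)}) :=
      P.step_mk hsym heL heP (by omega) (by omega) (by omega)
    have hlepair : ({(c1.1 : Q), (p1 : Q)} : Multiset Q) ≤ C1 :=
      pair_le (by omega) (by omega)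
        (fun hh => absurd hh.symm (P.neq_of_flags p1.2 c1.1.2))
    refine ⟨C1 - {(c1.1 : Q), (p1 : Q)} + {(c2.1 : Q), (p2 : Q)},
      Relation.ReflTransGen.tail hreach1 hstep, ⟨?_, ?_⟩, ?_, ?_⟩
    · intro r hr
      rw [count_move, if_neg (Ne.symm (P.neq_of_flags p1.2 hr)),
        if_neg (Ne.symm (P.neq_of_flags p2.2 hr)), hcL r hr, hinv.1 r hr]
      by_cases h1 : r = (c1.1 : Q) <;> by_cases h2 : r = (c2.1 : Q) <;> simp [h1, h2]
    · intro r h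
      have e1 := hinv.2 r h
      have e2 := flip_parity c1.2 p1 p2 ⟨r, h⟩
      rw [ite_subtype p1 r h, ite_subtype p2 r h] at e2
      rw [hflip, count_move, hC1, count_move,
        if_neg (P.neq_of_flags h c1.1.2), if_neg (P.neq_of_flags h c2.1.2)]
      by_cases h1 : r = P.qi
      · have hq6 : 6 ≤ C.count r := by rw [h1]; exact hqi
        rw [if_pos h1]
        split_ifs at e1 e2 ⊢ <;> omega
      · rw [if_neg h1]
        split_ifs at e1 e2 ⊢ <;> omega
    · rw [count_move, hC1, count_move, ind_self,
        if_neg (P.neq_of_flags P.hqi c1.1.2), if_neg (P.neq_of_flags P.hqi c2.1.2)]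
      split_ifs <;> omega
    · rw [card_move hlepair, hC1, card_move hqile]
  · -- process + process step
    have hpath1 := (hconn (p1 : Q) p1.2).1
    have hreach1 : P.Reach C (C - {P.qi, P.qi} + {(p1 : Q), (p1 : Q)}) :=
      P.movePairReach hsym hpath1 C (by omega)
    have hqile : ({P.qi, P.qi} : Multiset Q) ≤ C := pair_le (by omega) (by omega) (fun _ => by omega)
    set C1 := C - {P.qi, P.qi} + {(p1 : Q), (p1 : Q)} with hC1
    have hq4 : 4 ≤ C1.count P.qi := by
      rw [hC1, count_move, ind_self]
      by_cases h : P.qi = (p1 : Q)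
      · rw [if_pos h]; omega
      · rw [if_neg h]; omega
    have hpath3 := (hconn (p3 : Q) p3.2).1
    have hreach2 : P.Reach C1 (C1 - {P.qi, P.qi} + {(p3 : Q), (p3 : Q)}) :=
      P.movePairReach hsym hpath3 C1 (by omega)
    have hqile1 : ({P.qi, P.qi} : Multiset Q) ≤ C1 :=
      pair_le (by omega) (by omega) (fun _ => by omega)
    set C2 := C1 - {P.qi, P.qi} + {(p3 : Q), (p3 : Q)} with hC2
    have hc1 : 2 ≤ C2.count (p1 : Q) := by
      have hx1 : 2 ≤ C1.count (p1 : Q) := by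
        rw [hC1, count_move, ind_self]
        by_cases h : (p1 : Q) = P.qi
        · have h6 : 6 ≤ C.count (p1 : Q) := by rw [h]; exact hqi
          omega
        · rw [if_neg h]; omega
      rw [hC2, count_move]
      by_cases h : (p1 : Q) = P.qi
      · have h4 : 4 ≤ C1.count (p1 : Q) := by rw [h]; exact hq4
        rw [if_pos h]
        split_ifs <;> omega
      · rw [if_neg h]
        by_cases h3 : (p1 : Q) = (p3 : Q)
        · rw [if_pos h3]; omega
        · rw [if_neg h3]; omega
    have hc3 : 2 ≤ C2.count (p3 : Q) := by
      rw [hC2, count_move, ind_self]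
      by_cases h : (p3 : Q) = P.qi
      · have h4 : 4 ≤ C1.count (p3 : Q) := by rw [h]; exact hq4
        omega
      · rw [if_neg h]; omega
    have hstep : P.Step C2 (C2 - {(p1 : Q), (p3 : Q)} + {(p2 : Q), (p4 : Q)}) :=
      P.step_mk hsym he1 he2 (by omega) (by omega) (by omega)
    have hlepair : ({(p1 : Q), (p3 : Q)} : Multiset Q) ≤ C2 :=
      pair_le (by omega) (by omega) (fun _ => by omega)
    refine ⟨C2 - {(p1 : Q), (p3 : Q)} + {(p2 : Q), (p4 : Q)},
      Relation.ReflTransGen.trans hreach1 (Relation.ReflTransGen.tail hreach2 hstep),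
      ⟨?_, ?_⟩, ?_, ?_⟩
    · intro r hr
      rw [count_move, hC2, count_move, hC1, count_move,
        if_neg (Ne.symm (P.neq_of_flags P.hqi hr)),
        if_neg (Ne.symm (P.neq_of_flags p1.2 hr)), if_neg (Ne.symm (P.neq_of_flags p2.2 hr)),
        if_neg (Ne.symm (P.neq_of_flags p3.2 hr)), if_neg (Ne.symm (P.neq_of_flags p4.2 hr)),
        hinv.1 r hr, ← hLeq]
      omega
    · intro r h
      have e1 := hinv.2 r h
      have ep1 := flip_parity c1.2 p1 p2 ⟨r, h⟩
      have ep2 := flip_parity (flipTwo c1.2 p1 p2) p3 p4 ⟨r, h⟩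
      rw [ite_subtype p1 r h, ite_subtype p2 r h] at ep1
      rw [ite_subtype p3 r h, ite_subtype p4 r h] at ep2
      rw [hflip, count_move, hC2, count_move, hC1, count_move]
      by_cases h1 : r = P.qi
      · have hq6 : 6 ≤ C.count r := by rw [h1]; exact hqi
        rw [if_pos h1]
        split_ifs at e1 ep1 ep2 ⊢ <;> omega
      · rw [if_neg h1]
        split_ifs at e1 ep1 ep2 ⊢ <;> omega
    · rw [count_move, hC2, count_move, hC1, count_move, ind_self]
      split_ifs <;> omega
    · rw [card_move hlepair, hC2, card_move hqile1, hC1, card_move hqile]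

lemma liftRun (hsym : P.IsSymmetric) (hconn : P.Connected) :
    ∀ (L : ℕ) (c1 c2 : P.AbsConf), P.StepN L c1 c2 →
    ∀ C : Multiset Q, P.MyInv c1 C → 6 * L ≤ C.count P.qi →
    ∃ C', P.Reach C C' ∧ P.MyInv c2 C' ∧ C'.card = C.card := by
  intro L
  induction L with
  | zero =>
    intro c1 c2 h C hinv _
    have h' : c1 = c2 := h
    subst h'
    exact ⟨C, Relation.ReflTransGen.refl, hinv, rfl⟩
  | succ n ih =>
    intro c1 c2 h C hinv hcount
    obtain ⟨d, hd, hrest⟩ := h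
    obtain ⟨C1, r1, inv1, hcnt1, hcard1⟩ := P.stepLift hsym hconn hd hinv (by omega)
    obtain ⟨C2, r2, inv2, hcard2⟩ := ih d c2 hrest C1 inv1 (by omega)
    exact ⟨C2, Relation.ReflTransGen.trans r1 r2, inv2, by omega⟩

lemma gather [Fintype Q] (hsym : P.IsSymmetric) (hconn : P.Connected) :
    ∀ (m : ℕ) (C : Multiset Q),
      (∑ q ∈ Finset.univ.filter (fun q => P.isLeader q = false ∧ q ≠ P.qf), C.count q) = m →
      (∀ r, P.isLeader r = true → C.count r = if r = P.qfL then 1 else 0) →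
      (∀ r, P.isLeader r = false → r ≠ P.qf → C.count r % 2 = 0) →
      P.Reach C (P.Cf (C.card - 1)) := by
  intro m
  induction m using Nat.strong_induction_on with
  | _ m ih =>
    intro C hm hL hpar
    by_cases hz : ∀ r, P.isLeader r = false → r ≠ P.qf → C.count r = 0
    · have hC : C = Multiset.replicate (C.count P.qf) P.qf + {P.qfL} := by
        ext s
        rw [Multiset.count_add, Multiset.count_replicate, Multiset.count_singleton]
        by_cases hs : P.isLeader s = true
        · rw [hL s hs, if_neg (P.neq_of_flags P.hqf hs)]
          simp
        · have hs' : P.isLeader s = false := by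
            cases hb : P.isLeader s
            · rfl
            · exact absurd hb hs
          rw [if_neg (P.neq_of_flags hs' P.hqfL)]
          by_cases hsf : s = P.qf
          · rw [if_pos hsf.symm, hsf]
            omega
          · rw [if_neg (fun h => hsf h.symm), hz s hs' hsf]
      have hcard : C.card = C.count P.qf + 1 := by
        conv_lhs => rw [hC]
        simp
      have hfin : P.Cf (C.card - 1) = C := by
        rw [hcard]
        simp only [Nat.add_sub_cancel]
        rw [show P.Cf (C.count P.qf) = Multiset.replicate (C.count P.qf) P.qf + {P.qfL} from rfl]
        exact hC.symm
      rw [hfin]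
      exact Relation.ReflTransGen.refl
    · push_neg at hz
      obtain ⟨r, hr1, hr2, hr3⟩ := hz
      have hev := hpar r hr1 hr2
      have hge : 2 ≤ C.count r := by omega
      have hpathr := (hconn r hr1).2
      have hreach := P.movePairReach hsym hpathr C hge
      set C1 := C - {r, r} + {P.qf, P.qf} with hC1
      have hL1 : ∀ s, P.isLeader s = true → C1.count s = if s = P.qfL then 1 else 0 := by
        intro s hs
        rw [hC1, count_move, if_neg (Ne.symm (P.neq_of_flags hr1 hs)),
          if_neg (Ne.symm (P.neq_of_flags P.hqf hs)), hL s hs]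
        simp
      have hpar1 : ∀ s, P.isLeader s = false → s ≠ P.qf → C1.count s % 2 = 0 := by
        intro s hs hsf
        rw [hC1, count_move, if_neg hsf]
        by_cases h : s = r
        · have h2 : 2 ≤ C.count s := by rw [h]; exact hge
          have h0 : C.count s % 2 = 0 := hpar s hs hsf
          rw [if_pos h]
          omega
        · rw [if_neg h]
          have := hpar s hs hsf
          omega
      have hdec : (∑ q ∈ Finset.univ.filter (fun q => P.isLeader q = false ∧ q ≠ P.qf),
          C1.count q) < m := by
        rw [← hm]
        apply Finset.sum_lt_sum
        · intro i hi
          simp only [Finset.mem_filter] at hi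
          rw [hC1, count_move, if_neg hi.2.2]
          split_ifs <;> omega
        · refine ⟨r, ?_, ?_⟩
          · simp [hr1, hr2]
          · rw [hC1, count_move, if_neg hr2, ind_self]
            omega
      have hcard1 : C1.card = C.card := by
        rw [hC1]
        exact card_move (pair_le (by omega) (by omega) (fun _ => hge)) _ _
      have hrec := ih _ hdec C1 rfl hL1 hpar1
      rw [hcard1] at hrec
      exact Relation.ReflTransGen.trans hreach hrec

lemma ite_subtype' {X : Type} [DecidableEq X] {p : X → Prop} (aval : X) (ha : p aval)
    (r : X) (h : p r) :
    (if (⟨r, h⟩ : {x // p x}) = ⟨aval, ha⟩ then (1:ℕ) else 0) = if r = aval then 1 else 0 :=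
  if_congr (by simp) rfl rfl

set_option maxHeartbeats 2000000 in
lemma abs_step (hsym : P.IsSymmetric) {C C' : Multiset Q} (hst : P.Step C C')
    {c : P.AbsConf} (hc : P.MyInv c C) (hcard : C'.card = C.card) :
    ∃ c', P.EOStep c c' ∧ P.MyInv c' C' := by
  obtain ⟨a, q1, q2, q1', q2', e1, e2, h1, h2, h3, rfl⟩ := hst
  have hgood : ({q1, q1'} : Multiset Q) ≤ C := by
    by_cases hq : q1 = q1'
    · subst hq
      by_cases h4 : 2 ≤ C.count q1
      · exact pair_le h1 h1 (fun _ => h4)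
      · exfalso
        have hcnt : C.count q1 = 1 := by omega
        have heq : C - {q1, q1} = C - {q1} := by
          ext s
          rw [Multiset.count_sub, Multiset.count_sub, count_pair, Multiset.count_singleton]
          by_cases hs : s = q1
          · have hs1 : C.count s = 1 := by rw [hs]; exact hcnt
            rw [if_pos hs]
            omega
          · rw [if_neg hs]
        rw [heq] at hcard
        have hle : ({q1} : Multiset Q) ≤ C := by
          rw [Multiset.singleton_le]
          exact Multiset.count_pos.mp h1
        rw [Multiset.card_add, Multiset.card_sub hle, card_pair, Multiset.card_singleton]
          at hcard
        have hcle := Multiset.card_le_card hle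
        rw [Multiset.card_singleton] at hcle
        omega
    · exact pair_le h1 h2 (fun h => absurd h hq)
  have hcnts := Multiset.le_iff_count.mp hgood
  have f1 : P.isLeader q1 = P.isLeader q2 := P.hE _ e1
  have f2 : P.isLeader q1' = P.isLeader q2' := P.hE _ e2
  cases hb1 : P.isLeader q1 <;> cases hb2 : P.isLeader q1'
  · -- both processes
    have g1 : P.isLeader q2 = false := f1.symm.trans hb1
    have g2 : P.isLeader q2' = false := f2.symm.trans hb2
    refine ⟨(c.1, flipTwo (flipTwo c.2 ⟨q1, hb1⟩ ⟨q2, g1⟩) ⟨q1', hb2⟩ ⟨q2', g2⟩),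
      Or.inr ⟨rfl, a, ⟨q1, hb1⟩, ⟨q2, g1⟩, ⟨q1', hb2⟩, ⟨q2', g2⟩,
        (hsym q1 a q2).2 e1, e2, rfl⟩, ?_, ?_⟩
    · intro r hr
      show (C - {q1, q1'} + {q2, q2'}).count r = if r = (c.1 : Q) then 1 else 0
      rw [count_move, if_neg (Ne.symm (P.neq_of_flags hb1 hr)),
        if_neg (Ne.symm (P.neq_of_flags hb2 hr)), if_neg (Ne.symm (P.neq_of_flags g1 hr)),
        if_neg (Ne.symm (P.neq_of_flags g2 hr)), hc.1 r hr]
      omega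
    · intro r h
      show (C - {q1, q1'} + {q2, q2'}).count r % 2 =
        if flipTwo (flipTwo c.2 ⟨q1, hb1⟩ ⟨q2, g1⟩) ⟨q1', hb2⟩ ⟨q2', g2⟩ ⟨r, h⟩ then 1 else 0
      have e0 := hc.2 r h
      have ep1 := flip_parity c.2 ⟨q1, hb1⟩ ⟨q2, g1⟩ ⟨r, h⟩
      have ep2 := flip_parity (flipTwo c.2 ⟨q1, hb1⟩ ⟨q2, g1⟩) ⟨q1', hb2⟩ ⟨q2', g2⟩ ⟨r, h⟩
      rw [ite_subtype' q1 hb1 r h, ite_subtype' q2 g1 r h] at ep1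
      rw [ite_subtype' q1' hb2 r h, ite_subtype' q2' g2 r h] at ep2
      have hcc := hcnts r
      rw [count_pair] at hcc
      rw [count_move]
      split_ifs at e0 ep1 ep2 hcc ⊢ <;> omega
  · -- q1 process, q1' leader
    have g1 : P.isLeader q2 = false := f1.symm.trans hb1
    have g2 : P.isLeader q2' = true := f2.symm.trans hb2
    have hq1'c : q1' = (c.1 : Q) := by
      by_contra hne
      have hx := hc.1 q1' hb2
      rw [if_neg hne] at hx
      omega
    refine ⟨(⟨q2', g2⟩, flipTwo c.2 ⟨q1, hb1⟩ ⟨q2, g1⟩),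
      Or.inl ⟨a, ⟨q1, hb1⟩, ⟨q2, g1⟩, ?_, (hsym q1 a q2).2 e1, rfl⟩, ?_, ?_⟩
    · show ((c.1 : Q), RVAct.send a, q2') ∈ P.E
      rw [← hq1'c]
      exact e2
    · intro r hr
      show (C - {q1, q1'} + {q2, q2'}).count r = if r = q2' then 1 else 0
      rw [count_move, if_neg (Ne.symm (P.neq_of_flags hb1 hr)),
        if_neg (Ne.symm (P.neq_of_flags g1 hr)), hc.1 r hr, ← hq1'c]
      by_cases hr1 : r = q1' <;> by_cases hr2 : r = q2' <;> simp [hr1, hr2]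
    · intro r h
      show (C - {q1, q1'} + {q2, q2'}).count r % 2 =
        if flipTwo c.2 ⟨q1, hb1⟩ ⟨q2, g1⟩ ⟨r, h⟩ then 1 else 0
      have e0 := hc.2 r h
      have ep1 := flip_parity c.2 ⟨q1, hb1⟩ ⟨q2, g1⟩ ⟨r, h⟩
      rw [ite_subtype' q1 hb1 r h, ite_subtype' q2 g1 r h] at ep1
      have hcc := hcnts r
      rw [count_pair] at hcc
      rw [count_move, if_neg (P.neq_of_flags h hb2), if_neg (P.neq_of_flags h g2)]
      split_ifs at e0 ep1 hcc ⊢ <;> omega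
  · -- q1 leader, q1' process
    have g1 : P.isLeader q2 = true := f1.symm.trans hb1
    have g2 : P.isLeader q2' = false := f2.symm.trans hb2
    have hq1c : q1 = (c.1 : Q) := by
      by_contra hne
      have hx := hc.1 q1 hb1
      rw [if_neg hne] at hx
      omega
    refine ⟨(⟨q2, g1⟩, flipTwo c.2 ⟨q1', hb2⟩ ⟨q2', g2⟩),
      Or.inl ⟨a, ⟨q1', hb2⟩, ⟨q2', g2⟩, ?_, e2, rfl⟩, ?_, ?_⟩
    · show ((c.1 : Q), RVAct.send a, q2) ∈ P.E
      rw [← hq1c]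
      exact (hsym q1 a q2).2 e1
    · intro r hr
      show (C - {q1, q1'} + {q2, q2'}).count r = if r = q2 then 1 else 0
      rw [count_move, if_neg (Ne.symm (P.neq_of_flags hb2 hr)),
        if_neg (Ne.symm (P.neq_of_flags g2 hr)), hc.1 r hr, ← hq1c]
      by_cases hr1 : r = q1 <;> by_cases hr2 : r = q2 <;> simp [hr1, hr2]
    · intro r h
      show (C - {q1, q1'} + {q2, q2'}).count r % 2 =
        if flipTwo c.2 ⟨q1', hb2⟩ ⟨q2', g2⟩ ⟨r, h⟩ then 1 else 0
      have e0 := hc.2 r h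
      have ep1 := flip_parity c.2 ⟨q1', hb2⟩ ⟨q2', g2⟩ ⟨r, h⟩
      rw [ite_subtype' q1' hb2 r h, ite_subtype' q2' g2 r h] at ep1
      have hcc := hcnts r
      rw [count_pair] at hcc
      rw [count_move, if_neg (P.neq_of_flags h hb1), if_neg (P.neq_of_flags h g1)]
      split_ifs at e0 ep1 hcc ⊢ <;> omega
  · -- both leaders: impossible
    exfalso
    have hq1c : q1 = (c.1 : Q) := by
      by_contra hne
      have hx := hc.1 q1 hb1
      rw [if_neg hne] at hx
      omega
    have hq1'c : q1' = (c.1 : Q) := by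
      by_contra hne
      have hx := hc.1 q1' hb2
      rw [if_neg hne] at hx
      omega
    have hcc := hcnts q1
    rw [count_pair, ind_self, if_pos (hq1c.trans hq1'c.symm)] at hcc
    have hx := hc.1 q1 hb1
    rw [if_pos hq1c] at hx
    omega

lemma absSim (hsym : P.IsSymmetric) {C C' : Multiset Q} (h : P.Reach C C') :
    ∀ c, P.MyInv c C → C'.card = C.card → ∃ c', P.EOReach c c' ∧ P.MyInv c' C' := by
  induction h using Relation.ReflTransGen.head_induction_on with
  | refl => exact fun c hc _ => ⟨c, Relation.ReflTransGen.refl, hc⟩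
  | @head D D1 hstep hrest ih =>
    intro c hc hcard
    have h1 := P.step_card_mono hstep
    have h2 := P.reach_card_mono hrest
    obtain ⟨c1, hs1, hi1⟩ := P.abs_step hsym hstep hc (by omega)
    obtain ⟨c', hr, hi⟩ := ih c1 hi1 (by omega)
    exact ⟨c', Relation.ReflTransGen.head hs1 hr, hi⟩

lemma count_Ci (n : ℕ) (r : Q) :
    (P.Ci n).count r = (if P.qi = r then n else 0) + (if r = P.qiL then 1 else 0) := by
  rw [show P.Ci n = Multiset.replicate n P.qi + {P.qiL} from rfl, Multiset.count_add,
    Multiset.count_replicate, Multiset.count_singleton]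

lemma count_Cf (n : ℕ) (r : Q) :
    (P.Cf n).count r = (if P.qf = r then n else 0) + (if r = P.qfL then 1 else 0) := by
  rw [show P.Cf n = Multiset.replicate n P.qf + {P.qfL} from rfl, Multiset.count_add,
    Multiset.count_replicate, Multiset.count_singleton]

lemma card_Ci (n : ℕ) : (P.Ci n).card = n + 1 := by
  rw [show P.Ci n = Multiset.replicate n P.qi + {P.qiL} from rfl]
  simp

lemma card_Cf (n : ℕ) : (P.Cf n).card = n + 1 := by
  rw [show P.Cf n = Multiset.replicate n P.qf + {P.qfL} from rfl]
  simp

end RVProtocol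

/-- A symmetric rendez-vous protocol whose every process state lies on a
path from `q_i` to `q_f` admits a cut-off iff both `(q_i^L,γ_i^E) ⇝* (q_f^L,γ_f^E)` and
`(q_i^L,γ_i^O) ⇝* (q_f^L,γ_f^O)` hold in the even-odd abstraction. -/
theorem symmetric_cutoff_iff_eo_reach {Q A : Type} [Fintype Q] [Fintype A] [DecidableEq Q]
    (P : RVProtocol Q A) (hsym : P.IsSymmetric) (hconn : P.Connected) :
    (∃ B : ℕ, ∀ n ≥ B, P.Reach (P.Ci n) (P.Cf n)) ↔
    (P.EOReach P.absIE P.absFE ∧ P.EOReach P.absIO P.absFO) := by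
  constructor
  · rintro ⟨B, hB⟩
    constructor
    · -- even case: use n = 2 * B
      have hreach := hB (2 * B) (by omega)
      have hinv : P.MyInv P.absIE (P.Ci (2 * B)) := by
        constructor
        · intro r hr
          rw [P.count_Ci, if_neg (P.neq_of_flags P.hqi hr)]
          show 0 + (if r = P.qiL then 1 else 0) = if r = P.qiL then 1 else 0
          exact Nat.zero_add _
        · intro r h
          rw [P.count_Ci, if_neg (P.neq_of_flags h P.hqiL)]
          show ((if P.qi = r then 2 * B else 0) + 0) % 2 = 0
          split_ifs <;> omega
      obtain ⟨c', hr, hi⟩ :=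
        P.absSim hsym hreach P.absIE hinv (by rw [P.card_Ci, P.card_Cf])
      have hc1 : P.qfL = (c'.1 : Q) := by
        have h0 := hi.1 P.qfL P.hqfL
        rw [P.count_Cf, if_neg (P.neq_of_flags P.hqf P.hqfL), RVProtocol.ind_self] at h0
        by_contra hne
        rw [if_neg hne] at h0
        omega
      have hc2 : ∀ p : P.ProcState, c'.2 p = false := by
        intro p
        have h0 := hi.2 (p : Q) p.2
        rw [P.count_Cf, if_neg (P.neq_of_flags p.2 P.hqfL)] at h0
        have h0' : ((if P.qf = (p : Q) then 2 * B else 0) + 0) % 2 =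
            if c'.2 p then 1 else 0 := h0
        cases hb : c'.2 p
        · rfl
        · rw [hb] at h0'
          simp at h0'
          try split_ifs at h0' <;> omega
          try omega
      have hce : c' = P.absFE := by
        rw [Prod.ext_iff]
        refine ⟨Subtype.ext hc1.symm, ?_⟩
        funext p
        exact hc2 p
      exact hce ▸ hr
    · -- odd case: use n = 2 * B + 1
      have hreach := hB (2 * B + 1) (by omega)
      have hinv : P.MyInv P.absIO (P.Ci (2 * B + 1)) := by
        constructor
        · intro r hr
          rw [P.count_Ci, if_neg (P.neq_of_flags P.hqi hr)]
          show 0 + (if r = P.qiL then 1 else 0) = if r = P.qiL then 1 else 0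
          exact Nat.zero_add _
        · intro r h
          rw [P.count_Ci, if_neg (P.neq_of_flags h P.hqiL)]
          by_cases hq : r = P.qi
          · rw [if_pos hq.symm, show P.absIO.2 ⟨r, h⟩ = true from decide_eq_true hq]
            show (2 * B + 1 + 0) % 2 = if true then 1 else 0
            simp
          · rw [if_neg (fun hh => hq hh.symm),
              show P.absIO.2 ⟨r, h⟩ = false from decide_eq_false hq]
            simp
      obtain ⟨c', hr, hi⟩ :=
        P.absSim hsym hreach P.absIO hinv (by rw [P.card_Ci, P.card_Cf])
      have hc1 : P.qfL = (c'.1 : Q) := by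
        have h0 := hi.1 P.qfL P.hqfL
        rw [P.count_Cf, if_neg (P.neq_of_flags P.hqf P.hqfL), RVProtocol.ind_self] at h0
        by_contra hne
        rw [if_neg hne] at h0
        omega
      have hc2 : ∀ p : P.ProcState, c'.2 p = P.absFO.2 p := by
        intro p
        have h0 := hi.2 (p : Q) p.2
        rw [P.count_Cf, if_neg (P.neq_of_flags p.2 P.hqfL)] at h0
        have h0' : ((if P.qf = (p : Q) then 2 * B + 1 else 0) + 0) % 2 =
            if c'.2 p then 1 else 0 := h0
        by_cases hq : (p : Q) = P.qf
        · rw [if_pos hq.symm] at h0'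
          rw [show P.absFO.2 p = true from decide_eq_true hq]
          cases hb : c'.2 p
          · rw [hb] at h0'
            simp at h0'
            try omega
          · rfl
        · rw [if_neg (fun hh => hq hh.symm)] at h0'
          rw [show P.absFO.2 p = false from decide_eq_false hq]
          cases hb : c'.2 p
          · rfl
          · rw [hb] at h0'
            simp at h0'
            try omega
      have hce : c' = P.absFO := by
        rw [Prod.ext_iff]
        refine ⟨Subtype.ext hc1.symm, ?_⟩
        funext p
        exact hc2 p
      exact hce ▸ hr
  · rintro ⟨hE, hO⟩
    obtain ⟨LE, hLE⟩ := P.eoReach_stepN hE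
    obtain ⟨LO, hLO⟩ := P.eoReach_stepN hO
    refine ⟨6 * LE + 6 * LO, ?_⟩
    intro n hn
    rcases Nat.even_or_odd n with hpar | hpar
    · have hinv : P.MyInv P.absIE (P.Ci n) := by
        constructor
        · intro r hr
          rw [P.count_Ci, if_neg (P.neq_of_flags P.hqi hr)]
          show 0 + (if r = P.qiL then 1 else 0) = if r = P.qiL then 1 else 0
          exact Nat.zero_add _
        · intro r h
          rw [P.count_Ci, if_neg (P.neq_of_flags h P.hqiL)]
          show ((if P.qi = r then n else 0) + 0) % 2 = 0
          have hev := Nat.even_iff.mp hpar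
          split_ifs <;> omega
      have hcnt : 6 * LE ≤ (P.Ci n).count P.qi := by
        rw [P.count_Ci]
        simp [P.neq_of_flags P.hqi P.hqiL]
        omega
      obtain ⟨C', hr, hi, hcard⟩ :=
        P.liftRun hsym hconn LE P.absIE P.absFE hLE (P.Ci n) hinv hcnt
      have hg := P.gather hsym hconn _ C' rfl (fun r hr' => hi.1 r hr')
        (fun r hr' _ => hi.2 r hr')
      have hcc : C'.card - 1 = n := by
        rw [hcard, P.card_Ci]
        omega
      rw [hcc] at hg
      exact Relation.ReflTransGen.trans hr hg
    · have hinv : P.MyInv P.absIO (P.Ci n) := by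
        constructor
        · intro r hr
          rw [P.count_Ci, if_neg (P.neq_of_flags P.hqi hr)]
          show 0 + (if r = P.qiL then 1 else 0) = if r = P.qiL then 1 else 0
          exact Nat.zero_add _
        · intro r h
          rw [P.count_Ci, if_neg (P.neq_of_flags h P.hqiL)]
          have hod := Nat.odd_iff.mp hpar
          by_cases hq : r = P.qi
          · rw [if_pos hq.symm, show P.absIO.2 ⟨r, h⟩ = true from decide_eq_true hq]
            show (n + 0) % 2 = if true then 1 else 0
            simp
            omega
          · rw [if_neg (fun hh => hq hh.symm),
              show P.absIO.2 ⟨r, h⟩ = false from decide_eq_false hq]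
            simp
      have hcnt : 6 * LO ≤ (P.Ci n).count P.qi := by
        rw [P.count_Ci]
        simp [P.neq_of_flags P.hqi P.hqiL]
        omega
      obtain ⟨C', hr, hi, hcard⟩ :=
        P.liftRun hsym hconn LO P.absIO P.absFO hLO (P.Ci n) hinv hcnt
      have hg := P.gather hsym hconn _ C' rfl (fun r hr' => hi.1 r hr')
        (fun r hr' hne => by
          have h2 := hi.2 r hr'
          rw [show P.absFO.2 ⟨r, hr'⟩ = false from decide_eq_false hne] at h2
          simpa using h2)
      have hcc : C'.card - 1 = n := by
        rw [hcard, P.card_Ci]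
        omega
      rw [hcc] at hg
      exact Relation.ReflTransGen.trans hr hg
end

section
/- Let P be a rendez-vous protocol with no leader. Then there exists B ∈ ℕ such that C_i^(n) →* C_f^(n) for all n ≥ B if and only if there exists N ∈ ℕ such that C_i^(N) →* C_f^(N) and C_i^(N+1) →* C_f^(N+1). -/
/-- A rendez-vous protocol with no leader: a finite set of states `Q`, a finite
alphabet `A`, initial and final states, and a set of edges. -/
structure RVNProtocol (Q A : Type) : Type where
  qi : Q
  qf : Q
  E : Set (Q × RVAct A × Q)

namespace RVNProtocol

variable {Q A : Type} [DecidableEq Q] (P : RVNProtocol Q A)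

/-- One rendez-vous step between configurations (multisets of states). -/
def Step (C C' : Multiset Q) : Prop :=
  ∃ (a : A) (q1 q2 q1' q2' : Q),
    (q1, RVAct.recv a, q2) ∈ P.E ∧ (q1', RVAct.send a, q2') ∈ P.E ∧
    0 < C.count q1 ∧ 0 < C.count q1' ∧ 2 ≤ C.count q1 + C.count q1' ∧
    C' = C - {q1, q1'} + {q2, q2'}

/-- Reachability: reflexive-transitive closure of `Step`. -/
def Reach : Multiset Q → Multiset Q → Prop := Relation.ReflTransGen P.Step

/-- The initial configuration with `n` processes: `n` copies of `q_i`. -/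
def Ci (n : ℕ) : Multiset Q := Multiset.replicate n P.qi

/-- The final configuration with `n` processes: `n` copies of `q_f`. -/
def Cf (n : ℕ) : Multiset Q := Multiset.replicate n P.qf

end RVNProtocol

/-!
Reachability `C_i^(n) →* C_f^(n)` is compatible with juxtaposition: a run of `a` processes and a
run of `b` processes executed side by side give a run of `a + b` processes. So the solvable
population sizes form an additive submonoid of `ℕ`, and a submonoid of `ℕ` containing two
consecutive numbers has gcd `1` and hence contains every large enough number.
-/

theorem AddSubmonoid.exists_forall_ge_mem_of_mem_of_add_one_mem {S : AddSubmonoid ℕ} {N : ℕ}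
    (hN : N ∈ S) (hN1 : N + 1 ∈ S) : ∃ B, ∀ n ≥ B, n ∈ S := by
  have hgcd : Nat.setGcd {N, N + 1} = 1 :=
    Nat.dvd_one.mp <| (Nat.dvd_add_right (Nat.setGcd_dvd_of_mem (n := N) (by simp))).mp
      (Nat.setGcd_dvd_of_mem (by simp))
  have hclosure : AddSubmonoid.closure {N, N + 1} ≤ S :=
    AddSubmonoid.closure_le.mpr (Set.insert_subset_iff.mpr ⟨hN, Set.singleton_subset_iff.mpr hN1⟩)
  obtain ⟨B, hB⟩ := Nat.exists_mem_closure_of_ge {N, N + 1}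
  exact ⟨B, fun n hn => hclosure (hB n hn (by rw [hgcd]; exact one_dvd n))⟩

namespace RVNProtocol

variable {Q A : Type} [DecidableEq Q] {P : RVNProtocol Q A} {C C' : Multiset Q}

lemma Step.card_le (h : P.Step C C') : C.card ≤ C'.card := by
  obtain ⟨a, q1, q2, q1', q2', -, -, -, -, -, rfl⟩ := h
  calc C.card ≤ (C - {q1, q1'} + {q1, q1'}).card := Multiset.card_le_card le_tsub_add
    _ = (C - {q1, q1'} + {q2, q2'}).card := by simp

/-- Only steps preserving the number of processes lift to larger configurations: when `q1 = q1'`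
occurs once in `C`, the truncated difference `C - {q1, q1}` removes a single process and the step
adds one. -/
lemma Step.add_right (h : P.Step C C') (hcard : C'.card = C.card) (D : Multiset Q) :
    P.Step (C + D) (C' + D) := by
  obtain ⟨a, q1, q2, q1', q2', he1, he2, h1, h1', h2, rfl⟩ := h
  have hle : ({q1, q1'} : Multiset Q) ≤ C := by
    refine tsub_add_cancel_iff_le.mp (Multiset.eq_of_le_of_card_le le_tsub_add ?_).symm
    calc (C - {q1, q1'} + {q1, q1'}).card = (C - {q1, q1'} + {q2, q2'}).card := by simp
      _ ≤ C.card := hcard.le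
  refine ⟨a, q1, q2, q1', q2', he1, he2, ?_, ?_, ?_, ?_⟩
  · simp only [Multiset.count_add]; omega
  · simp only [Multiset.count_add]; omega
  · simp only [Multiset.count_add]; omega
  · rw [← tsub_add_eq_add_tsub hle, add_right_comm]

lemma Reach.card_le (h : P.Reach C C') : C.card ≤ C'.card := by
  induction h with
  | refl => exact le_rfl
  | tail _ hstep ih => exact ih.trans hstep.card_le

lemma Reach.add_right (h : P.Reach C C') (hcard : C'.card = C.card) (D : Multiset Q) :
    P.Reach (C + D) (C' + D) := by
  induction h with
  | refl => exact .refl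
  | @tail C₁ C' hreach hstep ih =>
    have h₁ := Reach.card_le hreach
    have h₂ := hstep.card_le
    exact Relation.ReflTransGen.tail (ih (by omega)) (hstep.add_right (by omega) D)

lemma reach_Ci_Cf_add {a b : ℕ} (ha : P.Reach (P.Ci a) (P.Cf a))
    (hb : P.Reach (P.Ci b) (P.Cf b)) : P.Reach (P.Ci (a + b)) (P.Cf (a + b)) := by
  have hfirst : P.Reach (P.Ci a + P.Ci b) (P.Cf a + P.Ci b) :=
    ha.add_right (by simp [Ci, Cf]) _
  have hsecond : P.Reach (P.Ci b + P.Cf a) (P.Cf b + P.Cf a) :=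
    hb.add_right (by simp [Ci, Cf]) _
  rw [add_comm (P.Ci b), add_comm (P.Cf b)] at hsecond
  simpa only [Reach, Ci, Cf, Multiset.replicate_add] using hfirst.trans hsecond

variable (P) in
def solvableSizes : AddSubmonoid ℕ where
  carrier := {n | P.Reach (P.Ci n) (P.Cf n)}
  zero_mem' := .refl
  add_mem' := reach_Ci_Cf_add

end RVNProtocol

theorem noleader_cutoff_iff_two_consecutive_general {Q A : Type}
    [DecidableEq Q] (P : RVNProtocol Q A) :
    (∃ B : ℕ, ∀ n ≥ B, P.Reach (P.Ci n) (P.Cf n)) ↔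
    (∃ N : ℕ, P.Reach (P.Ci N) (P.Cf N) ∧ P.Reach (P.Ci (N + 1)) (P.Cf (N + 1))) := by
  constructor
  · rintro ⟨B, hB⟩
    exact ⟨B, hB B le_rfl, hB (B + 1) B.le_succ⟩
  · rintro ⟨N, hN, hN1⟩
    exact AddSubmonoid.exists_forall_ge_mem_of_mem_of_add_one_mem
      (S := P.solvableSizes) hN hN1

/-- A rendez-vous protocol with no leader admits a cut-off iff there is
an `N` such that both `C_i^{(N)} →* C_f^{(N)}` and `C_i^{(N+1)} →* C_f^{(N+1)}`. -/
theorem noleader_cutoff_iff_two_consecutive {Q A : Type} [Fintype Q] [Fintype A]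
    [DecidableEq Q] (P : RVNProtocol Q A) :
    (∃ B : ℕ, ∀ n ≥ B, P.Reach (P.Ci n) (P.Cf n)) ↔
    (∃ N : ℕ, P.Reach (P.Ci N) (P.Cf N) ∧ P.Reach (P.Ci (N + 1)) (P.Cf (N + 1))) :=
  noleader_cutoff_iff_two_consecutive_general P
end

section
/- Let P be a symmetric rendez-vous protocol with no leader in which, for every q ∈ Q, the underlying graph has a path from q_i to q and a path from q to q_f. Then there exists B ∈ ℕ such that C_i^(n) →* C_f^(n) for all n ≥ B if and only if γ_i^O ⇝* γ_f^O in the leaderless even-odd abstraction, where γ_i^O(q_i) = O and γ_i^O(q) = E for all q ≠ q_i, and γ_f^O(q_f) = O and γ_f^O(q) = E for all q ≠ q_f. -/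
namespace RVNProtocol

variable {Q A : Type} [DecidableEq Q] (P : RVNProtocol Q A)

/-- A rendez-vous protocol with no leader is symmetric when `(q,!a,q') ∈ E` iff
`(q,?a,q') ∈ E`; such an edge is then written `(q,a,q')`. -/
def IsSymmetric : Prop :=
  ∀ (q : Q) (a : A) (q' : Q), (q, RVAct.send a, q') ∈ P.E ↔ (q, RVAct.recv a, q') ∈ P.E

/-- The step of the leaderless even-odd abstraction along the pair of edges
`e = (q1,a,q2)` and `e' = (q3,a,q4)` of `E`, carrying the same letter: the parities are
flipped at `q1,q2` (no change if `q1 = q2`) and then at `q3,q4` (no change if `q3 = q4`). -/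
def EOStepBy (e e' : Q × A × Q) (γ γ' : Q → Bool) : Prop :=
  (e.1, RVAct.send e.2.1, e.2.2) ∈ P.E ∧ (e'.1, RVAct.send e'.2.1, e'.2.2) ∈ P.E ∧
  e.2.1 = e'.2.1 ∧
  γ' = flipTwo (flipTwo γ e.1 e.2.2) e'.1 e'.2.2

/-- One step of the leaderless even-odd abstraction. -/
def EOStep (γ γ' : Q → Bool) : Prop := ∃ e e' : Q × A × Q, P.EOStepBy e e' γ γ'

/-- Reachability in the leaderless even-odd abstraction. -/
def EOReach : (Q → Bool) → (Q → Bool) → Prop := Relation.ReflTransGen P.EOStep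

end RVNProtocol

namespace RVNProtocol

variable {Q A : Type} [DecidableEq Q] (P : RVNProtocol Q A)

/-- The edge relation of the underlying graph of the protocol: there is an edge from
`q` to `q'` whenever `(q,a,q') ∈ E` for some letter `a`. -/
def Adj (q q' : Q) : Prop := ∃ a : A, (q, RVAct.send a, q') ∈ P.E

/-- Every state is on a path from `q_i` to `q_f` in the underlying graph. -/
def Connected : Prop :=
  ∀ q : Q, Relation.ReflTransGen P.Adj P.qi q ∧ Relation.ReflTransGen P.Adj q P.qf

end RVNProtocol

namespace RVNProtocol

open Multiset

variable {Q A : Type} [DecidableEq Q] (P : RVNProtocol Q A)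

/-- parity abstraction of a configuration -/
def par (C : Multiset Q) : Q → Bool := fun q => decide (C.count q % 2 = 1)

theorem flipTwo_eq {X : Type} [DecidableEq X] (γ : X → Bool) (x y : X) :
    flipTwo γ x y = fun q => xor (γ q) (xor (decide (q = x)) (decide (q = y))) := by
  funext q
  unfold flipTwo
  by_cases hxy : x = y
  · subst hxy; simp
  · simp only [hxy, if_neg]
    by_cases hx : q = x
    · subst hx; simp [hxy]
    · by_cases hy : q = y
      · subst hy; simp [hx]
      · simp [hx, hy]

theorem decide_add_mod (c k : ℕ) :
    decide ((c + k) % 2 = 1) = xor (decide (c % 2 = 1)) (decide (k % 2 = 1)) := by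
  by_cases hc : c % 2 = 1 <;> by_cases hk : k % 2 = 1 <;> simp [hc, hk] <;> omega

theorem par_add_pair (D : Multiset Q) (x y : Q) :
    par (D + {x, y}) = fun q => xor (par D q) (xor (decide (q = x)) (decide (q = y))) := by
  funext q
  simp only [par, Multiset.count_add, decide_add_mod]
  congr 1
  by_cases hx : q = x <;> by_cases hy : q = y <;> by_cases hxy : x = y <;>
    simp_all [Multiset.count_cons, Multiset.count_singleton]

theorem pair_card (x y : Q) : Multiset.card ({x, y} : Multiset Q) = 2 := by
  simp

theorem pair_add_pair (x x' y y' : Q) :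
    ({x, x'} : Multiset Q) + {y, y'} = {x, y} + {x', y'} := by
  ext a
  simp only [Multiset.count_add, Multiset.insert_eq_cons, Multiset.count_cons,
    Multiset.count_singleton]
  split_ifs <;> omega

theorem ctxStep {a : A} {q1 q2 q1' q2' : Q}
    (h1 : (q1, RVAct.recv a, q2) ∈ P.E) (h2 : (q1', RVAct.send a, q2') ∈ P.E)
    (D : Multiset Q) : P.Step (D + {q1, q1'}) (D + {q2, q2'}) := by
  refine ⟨a, q1, q2, q1', q2', h1, h2, ?_, ?_, ?_, ?_⟩
  · simp only [Multiset.count_add, Multiset.insert_eq_cons, Multiset.count_cons,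
      Multiset.count_singleton]
    split_ifs <;> omega
  · simp only [Multiset.count_add, Multiset.insert_eq_cons, Multiset.count_cons,
      Multiset.count_singleton]
    split_ifs <;> omega
  · simp only [Multiset.count_add, Multiset.insert_eq_cons, Multiset.count_cons,
      Multiset.count_singleton]
    split_ifs <;> omega
  · rw [add_tsub_cancel_right]

theorem pairWalk (hsym : P.IsSymmetric) {q q' : Q}
    (h : Relation.ReflTransGen P.Adj q q') (D : Multiset Q) :
    P.Reach (D + {q, q}) (D + {q', q'}) := by
  induction h with
  | refl => exact Relation.ReflTransGen.refl
  | tail hab hbc ih =>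
    obtain ⟨a, ha⟩ := hbc
    exact ih.tail (P.ctxStep ((hsym _ a _).mp ha) ha D)

theorem fourMove (hsym : P.IsSymmetric) (hconn : P.Connected) {a : A} {q1 q2 q3 q4 : Q}
    (h1 : (q1, RVAct.send a, q2) ∈ P.E) (h2 : (q3, RVAct.send a, q4) ∈ P.E)
    (D : Multiset Q) :
    P.Reach (D + Multiset.replicate 4 P.qi) (D + {q1, q2} + {q3, q4}) := by
  have e0 : D + Multiset.replicate 4 P.qi = (D + {P.qi, P.qi}) + {P.qi, P.qi} := by
    rw [add_assoc]; rfl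
  have r1 : P.Reach ((D + {P.qi, P.qi}) + {P.qi, P.qi}) ((D + {P.qi, P.qi}) + {q3, q3}) :=
    P.pairWalk hsym (hconn q3).1 _
  have e1 : (D + {P.qi, P.qi}) + {q3, q3} = (D + {q3, q3}) + {P.qi, P.qi} := by
    rw [add_right_comm]
  have r2 : P.Reach ((D + {q3, q3}) + {P.qi, P.qi}) ((D + {q3, q3}) + {q1, q1}) :=
    P.pairWalk hsym (hconn q1).1 _
  have e2 : (D + {q3, q3}) + {q1, q1} = (D + {q1, q3}) + {q1, q3} := by
    ext a
    simp only [Multiset.count_add, Multiset.insert_eq_cons, Multiset.count_cons,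
      Multiset.count_singleton]
    split_ifs <;> omega
  have r3 : P.Step ((D + {q1, q3}) + {q1, q3}) ((D + {q1, q3}) + {q2, q4}) :=
    P.ctxStep ((hsym _ a _).mp h1) h2 _
  have e3 : (D + {q1, q3}) + {q2, q4} = (D + {q1, q2}) + {q3, q4} := by
    ext a
    simp only [Multiset.count_add, Multiset.insert_eq_cons, Multiset.count_cons,
      Multiset.count_singleton]
    split_ifs <;> omega
  rw [e0]
  exact ((r1.trans (e1 ▸ r2)).trans (e2 ▸ Relation.ReflTransGen.single r3)).trans
    (e3 ▸ Relation.ReflTransGen.refl)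

theorem simEO (hsym : P.IsSymmetric) (hconn : P.Connected) {γf γ : Q → Bool}
    (h : P.EOReach γ γf) :
    ∃ k : ℕ, ∀ D : Multiset Q, par D = γ →
      ∃ D' : Multiset Q, P.Reach (D + Multiset.replicate (4 * k) P.qi) D' ∧
        par D' = γf ∧ Multiset.card D' = Multiset.card D + 4 * k := by
  induction h using Relation.ReflTransGen.head_induction_on with
  | refl =>
    refine ⟨0, fun D hD => ⟨D, ?_, hD, by simp⟩⟩
    simp only [Nat.mul_zero, Multiset.replicate_zero, add_zero]
    exact Relation.ReflTransGen.refl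
  | @head γ1 γ2 hstep _ ih =>
    obtain ⟨k, hk⟩ := ih
    obtain ⟨e, e', he, he', hl, hγ'⟩ := hstep
    refine ⟨k + 1, fun D hD => ?_⟩
    have h2' : (e'.1, RVAct.send e.2.1, e'.2.2) ∈ P.E := by rw [hl]; exact he'
    have r0 : P.Reach ((D + Multiset.replicate (4 * k) P.qi) + Multiset.replicate 4 P.qi)
        ((D + Multiset.replicate (4 * k) P.qi) + {e.1, e.2.2} + {e'.1, e'.2.2}) :=
      P.fourMove hsym hconn he h2' _
    have e0 : D + Multiset.replicate (4 * (k + 1)) P.qi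
        = (D + Multiset.replicate (4 * k) P.qi) + Multiset.replicate 4 P.qi := by
      have h4 : 4 * (k + 1) = 4 * k + 4 := by ring
      rw [h4, add_assoc, ← Multiset.replicate_add]
    have e1 : (D + Multiset.replicate (4 * k) P.qi) + {e.1, e.2.2} + {e'.1, e'.2.2}
        = (D + {e.1, e.2.2} + {e'.1, e'.2.2}) + Multiset.replicate (4 * k) P.qi := by
      ext x
      simp only [Multiset.count_add]
      omega
    have hpar1 : par (D + {e.1, e.2.2} + {e'.1, e'.2.2})
        = flipTwo (flipTwo γ1 e.1 e.2.2) e'.1 e'.2.2 := by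
      funext q
      simp only [flipTwo_eq, par_add_pair, hD]
    obtain ⟨D', hr, hp, hc⟩ := hk (D + {e.1, e.2.2} + {e'.1, e'.2.2}) (hpar1.trans hγ'.symm)
    refine ⟨D', ?_, hp, ?_⟩
    · rw [e0]
      exact r0.trans (e1 ▸ hr)
    · rw [hc]
      simp only [Multiset.card_add, Multiset.insert_eq_cons, Multiset.card_cons,
        Multiset.card_singleton]
      omega

theorem cleanup_aux (hsym : P.IsSymmetric) (hconn : P.Connected) :
    ∀ (m : ℕ) (C : Multiset Q), Multiset.card C - C.count P.qf ≤ m →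
      (∀ q, q ≠ P.qf → C.count q % 2 = 0) →
      P.Reach C (Multiset.replicate (Multiset.card C) P.qf) := by
  intro m
  induction m with
  | zero =>
    intro C hm _
    have h1 : C.count P.qf ≤ Multiset.card C := Multiset.count_le_card _ _
    have h2 : C.count P.qf = Multiset.card C := by omega
    have h3 : C = Multiset.replicate (Multiset.card C) P.qf := by
      rw [Multiset.eq_replicate_card]
      intro b hb
      exact ((Multiset.count_eq_card.mp h2) b hb).symm
    rw [← h3]
    exact Relation.ReflTransGen.refl
  | succ m ih =>
    intro C hm hpar
    by_cases hall : C.count P.qf = Multiset.card C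
    · have h3 : C = Multiset.replicate (Multiset.card C) P.qf := by
        rw [Multiset.eq_replicate_card]
        intro b hb
        exact ((Multiset.count_eq_card.mp hall) b hb).symm
      rw [← h3]
      exact Relation.ReflTransGen.refl
    · have h2 : ¬ ∀ b ∈ C, P.qf = b := fun h => hall (Multiset.count_eq_card.mpr h)
      push_neg at h2
      obtain ⟨q, hqC, hqne⟩ := h2
      have hq2 : 2 ≤ C.count q := by
        have hev := hpar q (Ne.symm hqne)
        have h1c : 1 ≤ C.count q := Multiset.one_le_count_iff_mem.mpr hqC
        omega
      have hle : ({q, q} : Multiset Q) ≤ C := by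
        rw [Multiset.le_iff_count]
        intro x
        by_cases hx : x = q
        · subst hx
          simpa [Multiset.insert_eq_cons, Multiset.count_cons] using hq2
        · simp [Multiset.insert_eq_cons, Multiset.count_cons, Multiset.count_singleton, hx]
      have hC : C - {q, q} + {q, q} = C := tsub_add_cancel_of_le hle
      set D := C - {q, q} with hDdef
      have r1 : P.Reach C (D + {P.qf, P.qf}) := by
        rw [← hC]
        exact P.pairWalk hsym (hconn q).2 D
      have hcnt2 : ∀ x, Multiset.count x ({q, q} : Multiset Q) = if x = q then 2 else 0 := by
        intro x
        by_cases hx : x = q <;>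
          simp [Multiset.insert_eq_cons, Multiset.count_cons, Multiset.count_singleton, hx]
      have hcntf : ∀ x, Multiset.count x ({P.qf, P.qf} : Multiset Q)
          = if x = P.qf then 2 else 0 := by
        intro x
        by_cases hx : x = P.qf <;>
          simp [Multiset.insert_eq_cons, Multiset.count_cons, Multiset.count_singleton, hx]
      have hcntC : ∀ x, Multiset.count x C = Multiset.count x D + (if x = q then 2 else 0) := by
        intro x
        conv_lhs => rw [← hC]
        rw [Multiset.count_add, hcnt2]
      have hcard : Multiset.card (D + {P.qf, P.qf}) = Multiset.card C := by
        have := congrArg Multiset.card hC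
        simp only [Multiset.card_add, Multiset.insert_eq_cons, Multiset.card_cons,
          Multiset.card_singleton] at this ⊢
        omega
      have hqnef : q ≠ P.qf := Ne.symm hqne
      have hcountf : (D + {P.qf, P.qf}).count P.qf = C.count P.qf + 2 := by
        rw [Multiset.count_add, hcntf, if_pos rfl, hcntC P.qf, if_neg hqne]
      have hm' : Multiset.card (D + {P.qf, P.qf}) - (D + {P.qf, P.qf}).count P.qf ≤ m := by
        rw [hcard, hcountf]
        have h1 : C.count P.qf ≤ Multiset.card C := Multiset.count_le_card _ _
        omega
      have hpar' : ∀ x, x ≠ P.qf → (D + {P.qf, P.qf}).count x % 2 = 0 := by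
        intro x hx
        have h5 := hpar x hx
        have h6 := hcntC x
        rw [Multiset.count_add, hcntf, if_neg hx]
        by_cases hxq : x = q
        · rw [h6, if_pos hxq] at h5
          omega
        · rw [h6, if_neg hxq] at h5
          omega
      have hrec := ih (D + {P.qf, P.qf}) hm' hpar'
      rw [hcard] at hrec
      exact r1.trans hrec

theorem stepCardLe {C C' : Multiset Q} (h : P.Step C C') :
    Multiset.card C ≤ Multiset.card C' := by
  obtain ⟨a, q1, q2, q1', q2', _, _, h1, h1', hsum, hC'⟩ := h
  have hle : C ≤ C - ({q1, q1'} : Multiset Q) + {q1, q1'} := le_tsub_add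
  have h2 := Multiset.card_le_card hle
  rw [hC']
  simp only [Multiset.card_add, Multiset.insert_eq_cons, Multiset.card_cons,
    Multiset.card_singleton] at h2 ⊢
  omega

theorem reachCardLe {C C' : Multiset Q} (h : P.Reach C C') :
    Multiset.card C ≤ Multiset.card C' := by
  induction h with
  | refl => exact le_rfl
  | tail _ hbc ih => exact ih.trans (P.stepCardLe hbc)

theorem stepEO (hsym : P.IsSymmetric) {C C' : Multiset Q} (h : P.Step C C')
    (hcard : Multiset.card C' = Multiset.card C) : P.EOStep (par C) (par C') := by
  obtain ⟨a, q1, q2, q1', q2', h1, h2, hc1, hc1', hsum, hC'⟩ := h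
  have hle : ({q1, q1'} : Multiset Q) ≤ C := by
    by_cases hq : q1 = q1'
    · subst hq
      by_cases hcnt : 2 ≤ C.count q1
      · rw [Multiset.le_iff_count]
        intro x
        by_cases hx : x = q1
        · subst hx
          simpa [Multiset.insert_eq_cons, Multiset.count_cons] using hcnt
        · simp [Multiset.insert_eq_cons, Multiset.count_cons, Multiset.count_singleton, hx]
      · exfalso
        have hone : C.count q1 = 1 := by omega
        have he : C - ({q1, q1} : Multiset Q) = C - {q1} := by
          ext x
          rw [Multiset.count_sub, Multiset.count_sub]
          by_cases hx : x = q1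
          · subst hx
            simp [Multiset.insert_eq_cons, Multiset.count_cons, Multiset.count_singleton, hone]
          · simp [Multiset.insert_eq_cons, Multiset.count_cons, Multiset.count_singleton, hx]
        have hsle : ({q1} : Multiset Q) ≤ C :=
          Multiset.singleton_le.mpr (Multiset.count_pos.mp hc1)
        have hc : C - {q1} + {q1} = C := tsub_add_cancel_of_le hsle
        have hcc := congrArg Multiset.card hc
        have hcc' := congrArg Multiset.card hC'
        rw [he] at hcc'
        simp only [Multiset.card_add, Multiset.insert_eq_cons, Multiset.card_cons,
          Multiset.card_singleton] at hcc hcc'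
        omega
    · rw [Multiset.le_iff_count]
      intro x
      simp only [Multiset.insert_eq_cons, Multiset.count_cons, Multiset.count_singleton]
      by_cases hx : x = q1
      · by_cases hx' : x = q1'
        · exact absurd (hx.symm.trans hx') hq
        · rw [if_pos hx, if_neg hx', hx]
          omega
      · by_cases hx' : x = q1'
        · rw [if_pos hx', if_neg hx, hx']
          omega
        · rw [if_neg hx, if_neg hx']
          exact Nat.zero_le _
  have hCeq : C - {q1, q1'} + {q1, q1'} = C := tsub_add_cancel_of_le hle
  refine ⟨(q1, a, q2), (q1', a, q2'), (hsym q1 a q2).mpr h1, h2, rfl, ?_⟩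
  show par C' = flipTwo (flipTwo (par C) q1 q2) q1' q2'
  rw [hC', ← hCeq]
  set D := C - ({q1, q1'} : Multiset Q) with hDdef
  have hx1 : D + {q1, q1'} - {q1, q1'} = D := add_tsub_cancel_right _ _
  rw [hx1]
  funext q
  simp only [flipTwo_eq, par_add_pair]
  generalize par D q = b
  generalize decide (q = q1) = b1
  generalize decide (q = q1') = b2
  generalize decide (q = q2) = b3
  generalize decide (q = q2') = b4
  cases b <;> cases b1 <;> cases b2 <;> cases b3 <;> cases b4 <;> rfl

theorem reachEO (hsym : P.IsSymmetric) {C C' : Multiset Q} (h : P.Reach C C')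
    (hcard : Multiset.card C = Multiset.card C') : P.EOReach (par C) (par C') := by
  induction h with
  | refl => exact Relation.ReflTransGen.refl
  | @tail b c hab hbc ih =>
    have hb1 := P.reachCardLe hab
    have hb2 := P.stepCardLe hbc
    exact (ih (by omega)).tail (P.stepEO hsym hbc (by omega))

end RVNProtocol

/-- A symmetric rendez-vous protocol with no leader, in which every
state lies on a path from `q_i` to `q_f`, admits a cut-off iff `γ_i^O ⇝* γ_f^O` in the
leaderless even-odd abstraction, where `γ_i^O` is odd exactly at `q_i` and `γ_f^O` is odd
exactly at `q_f`. -/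
theorem noleader_symmetric_cutoff_iff_eo_reach {Q A : Type} [Fintype Q] [Fintype A]
    [DecidableEq Q] (P : RVNProtocol Q A) (hsym : P.IsSymmetric) (hconn : P.Connected) :
    (∃ B : ℕ, ∀ n ≥ B, P.Reach (P.Ci n) (P.Cf n)) ↔
    P.EOReach (fun q => decide (q = P.qi)) (fun q => decide (q = P.qf)) := by
  constructor
  · rintro ⟨B, hB⟩
    have hrun := hB (2 * B + 1) (by omega)
    have hcard : Multiset.card (P.Ci (2 * B + 1)) = Multiset.card (P.Cf (2 * B + 1)) := by
      simp [RVNProtocol.Ci, RVNProtocol.Cf]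
    have h := P.reachEO hsym hrun hcard
    have hpi : RVNProtocol.par (P.Ci (2 * B + 1)) = fun q => decide (q = P.qi) := by
      funext q
      simp only [RVNProtocol.par, RVNProtocol.Ci, Multiset.count_replicate]
      by_cases hq : P.qi = q
      · rw [if_pos hq]
        have h1 : (2 * B + 1) % 2 = 1 := by omega
        simp [h1, hq.symm]
      · rw [if_neg hq]
        simp [Ne.symm hq]
    have hpf : RVNProtocol.par (P.Cf (2 * B + 1)) = fun q => decide (q = P.qf) := by
      funext q
      simp only [RVNProtocol.par, RVNProtocol.Cf, Multiset.count_replicate]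
      by_cases hq : P.qf = q
      · rw [if_pos hq]
        have h1 : (2 * B + 1) % 2 = 1 := by omega
        simp [h1, hq.symm]
      · rw [if_neg hq]
        simp [Ne.symm hq]
    rw [← hpi, ← hpf]
    exact h
  · intro hEO
    obtain ⟨k, hk⟩ := P.simEO hsym hconn hEO
    refine ⟨4 * k + 1, fun n hn => ?_⟩
    by_cases hpar2 : n % 2 = 0
    · have hcnt : ∀ q, q ≠ P.qf → (P.Ci n).count q % 2 = 0 := by
        intro q hq
        simp only [RVNProtocol.Ci, Multiset.count_replicate]
        by_cases hq' : P.qi = q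
        · rw [if_pos hq']
          omega
        · rw [if_neg hq']
      have hcc : Multiset.card (P.Ci n) = n := by simp [RVNProtocol.Ci]
      have hm : Multiset.card (P.Ci n) - (P.Ci n).count P.qf ≤ n := by omega
      have hrc := P.cleanup_aux hsym hconn n (P.Ci n) hm hcnt
      rw [hcc] at hrc
      exact hrc
    · set D := Multiset.replicate (n - 4 * k) P.qi with hDdef
      have hDpar : RVNProtocol.par D = fun q => decide (q = P.qi) := by
        funext q
        simp only [RVNProtocol.par, hDdef, Multiset.count_replicate]
        by_cases hq : P.qi = q
        · rw [if_pos hq]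
          have h1 : (n - 4 * k) % 2 = 1 := by omega
          simp [h1, hq.symm]
        · rw [if_neg hq]
          simp [Ne.symm hq]
      obtain ⟨D', hr, hp, hc⟩ := hk D hDpar
      have heq : D + Multiset.replicate (4 * k) P.qi = P.Ci n := by
        rw [hDdef, ← Multiset.replicate_add]
        have h5 : n - 4 * k + 4 * k = n := by omega
        rw [h5]
        rfl
      rw [heq] at hr
      have hcard : Multiset.card D' = n := by
        rw [hc, hDdef]
        simp only [Multiset.card_replicate]
        omega
      have hcnt : ∀ q, q ≠ P.qf → D'.count q % 2 = 0 := by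
        intro q hq
        have hthis := congrFun hp q
        simp only [RVNProtocol.par] at hthis
        have h2 : decide (D'.count q % 2 = 1) = false := by
          rw [hthis]
          simp [hq]
        simp only [decide_eq_false_iff_not] at h2
        omega
      have hclean := P.cleanup_aux hsym hconn (Multiset.card D') D' (by omega) hcnt
      rw [hcard] at hclean
      exact hr.trans hclean
end

section
/- Let P be a rendez-vous protocol with no leader such that no edge of E has source q_f, and let N'_P be the Petri net obtained by merging N_P with its reverse at the place p_{q_f}. Then there exists N ∈ ℕ such that C_i^(N) →* C_f^(N) and C_i^(N+1) →* C_f^(N+1) in P if and only if, in N'_P, M^(1) ∈ Reach(M_0) and M_0 ∈ Reach(M^(1)), where M_0 is the zero marking and M^(1) is the marking with one token in p_{q_f} and none elsewhere. -/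
namespace RVNProtocol

variable {Q A : Type} [DecidableEq Q] (P : RVNProtocol Q A)

/-- The places of the merged Petri net `N'_P`: the places `p_q` of `N_P` (`Sum.inl q`)
together with the places `p_q^R` of the reverse net `N_P^R` for `q ≠ q_f` (`Sum.inr`);
the place `p_{q_f}^R` is identified with `p_{q_f}` (see `placeR`). -/
abbrev MergedPlace : Type := Q ⊕ {q : Q // q ≠ P.qf}

/-- The place `p_q^R` of the reverse part of `N'_P`; for `q = q_f` it is the merged place
`p_{q_f}`. -/
def placeR (q : Q) : P.MergedPlace :=
  if h : q = P.qf then Sum.inl P.qf else Sum.inr ⟨q, h⟩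

/-- The firing relation of the Petri net `N'_P`, disjoint union of `N_P` (transition `t_i`
producing a token in `p_{q_i}`, and one transition per pair of edges `(q1,!a,q1')`,
`(q2,?a,q2')` consuming tokens in `p_{q1}, p_{q2}` and producing tokens in
`p_{q1'}, p_{q2'}`) and of its reverse `N_P^R` (all pre/post exchanged, on the reverse
places), where `p_{q_f}` and `p_{q_f}^R` have been merged into the single place
`p_{q_f}`. -/
def MergedStep (M M' : P.MergedPlace → ℕ) : Prop :=
  -- transition `t_i` of `N_P`
  (M' = M + Pi.single (Sum.inl P.qi : P.MergedPlace) 1) ∨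
  -- rendez-vous transitions of `N_P`
  (∃ (a : A) (q1 q2 q1' q2' : Q),
    (q1, RVAct.send a, q1') ∈ P.E ∧ (q2, RVAct.recv a, q2') ∈ P.E ∧
    Pi.single (Sum.inl q1 : P.MergedPlace) 1 + Pi.single (Sum.inl q2 : P.MergedPlace) 1 ≤ M ∧
    M' = M - (Pi.single (Sum.inl q1 : P.MergedPlace) 1
              + Pi.single (Sum.inl q2 : P.MergedPlace) 1)
            + (Pi.single (Sum.inl q1' : P.MergedPlace) 1
              + Pi.single (Sum.inl q2' : P.MergedPlace) 1)) ∨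
  -- transition `t_i^R` of `N_P^R`
  (Pi.single (P.placeR P.qi) 1 ≤ M ∧ M' = M - Pi.single (P.placeR P.qi) 1) ∨
  -- reversed rendez-vous transitions of `N_P^R`
  (∃ (a : A) (q1 q2 q1' q2' : Q),
    (q1, RVAct.send a, q1') ∈ P.E ∧ (q2, RVAct.recv a, q2') ∈ P.E ∧
    Pi.single (P.placeR q1') 1 + Pi.single (P.placeR q2') 1 ≤ M ∧
    M' = M - (Pi.single (P.placeR q1') 1 + Pi.single (P.placeR q2') 1)
            + (Pi.single (P.placeR q1) 1 + Pi.single (P.placeR q2) 1))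

/-- Reachability in the merged net `N'_P`. -/
def MergedReach : (P.MergedPlace → ℕ) → (P.MergedPlace → ℕ) → Prop :=
  Relation.ReflTransGen P.MergedStep

end RVNProtocol

/-!
(⇒) Fire `t_i` `N + 1` times, run the protocol forward to `C_f^{(N+1)}`, regard `N` of the
`N + 1` tokens of the shared place `p_{q_f}` as the configuration `C_f^{(N)}` of the reverse net,
run it back to `C_i^{(N)}` and remove these tokens with `t_i^R`: one token stays in `p_{q_f}`.
Exchanging the roles of `N` and `N + 1` leads back from `M^{(1)}` to `M_0`.

(⇐) Every marking reachable from `M_0` consists of a configuration `C` in `N_P` and `D` in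
`N_P^R` such that `C_i^{(n)} →* C + k·q_f` and `D + C_i^{(j)} →* k·q_f` for some `n, j, k`:
the forward half and the reversed backward half of a run, glued at `k` final processes.
For `M^{(1)}` this forces `C = 0`, `D = q_f`, `n = k = j + 1`, and since `q_f` is a sink the
process in `q_f` can be removed from the second run, giving `C_i^{(j)} →* C_f^{(j)}`.
Only steps in which two distinct processes meet are simulated by the nets; the other steps
increase the number of processes, so they do not occur in runs from `C_i^{(n)}` to `C_f^{(n)}`.
-/

namespace Multiset

variable {ι : Type*} [DecidableEq ι]

def marking (S : Multiset ι) : ι → ℕ := fun p => S.count p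

@[simp]
lemma marking_zero : marking (0 : Multiset ι) = 0 := by
  funext p; simp [marking]

lemma marking_add (S T : Multiset ι) : marking (S + T) = marking S + marking T := by
  funext p; simp [marking]

lemma marking_singleton (p : ι) : marking {p} = Pi.single p 1 := by
  funext q; simp [marking, Pi.single_apply, count_singleton]

lemma marking_le_marking {S T : Multiset ι} : marking S ≤ marking T ↔ S ≤ T :=
  le_iff_count.symm

lemma marking_injective : Function.Injective (marking : Multiset ι → ι → ℕ) :=
  fun _ _ h => ext.2 (congrFun h)

lemma marking_le_and_eq_tsub_add_iff {S S' T : Multiset ι} {M : ι → ℕ} :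
    (marking S ≤ marking T ∧ M = marking T - marking S + marking S') ↔
      ∃ X, T = S + X ∧ M = marking (S' + X) := by
  have fire (X : Multiset ι) : marking (S + X) - marking S + marking S' = marking (S' + X) := by
    rw [marking_add S, add_tsub_cancel_left, marking_add, add_comm]
  constructor
  · rintro ⟨hle, rfl⟩
    obtain ⟨X, rfl⟩ := exists_add_of_le (marking_le_marking.1 hle)
    exact ⟨X, rfl, fire X⟩
  · rintro ⟨X, rfl, rfl⟩
    exact ⟨marking_le_marking.2 le_self_add, (fire X).symm⟩

lemma marking_le_and_eq_tsub_iff {S T : Multiset ι} {M : ι → ℕ} :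
    (marking S ≤ marking T ∧ M = marking T - marking S) ↔
      ∃ X, T = S + X ∧ M = marking X := by
  simpa using marking_le_and_eq_tsub_add_iff (S' := 0) (T := T) (M := M)

end Multiset

open Multiset

namespace RVNProtocol

section ProperStep

variable {Q A : Type} (P : RVNProtocol Q A)

def ProperStep (C C' : Multiset Q) : Prop :=
  ∃ (a : A) (q1 q2 q1' q2' : Q) (R : Multiset Q),
    (q1, RVAct.recv a, q2) ∈ P.E ∧ (q1', RVAct.send a, q2') ∈ P.E ∧
    C = {q1, q1'} + R ∧ C' = {q2, q2'} + R

def ProperReach : Multiset Q → Multiset Q → Prop := Relation.ReflTransGen P.ProperStep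

def Glued (C D : Multiset Q) : Prop :=
  ∃ n j k : ℕ, P.ProperReach (P.Ci n) (C + replicate k P.qf) ∧
    P.ProperReach (D + P.Ci j) (replicate k P.qf)

variable {P}

lemma ProperStep.card_eq {C C' : Multiset Q} (h : P.ProperStep C C') : C'.card = C.card := by
  obtain ⟨a, q1, q2, q1', q2', R, -, -, rfl, rfl⟩ := h
  simp

lemma ProperReach.card_eq {C C' : Multiset Q} (h : P.ProperReach C C') : C'.card = C.card := by
  induction h with
  | refl => rfl
  | tail _ hs ih => rw [hs.card_eq, ih]

lemma ProperStep.add_right {C C' : Multiset Q} (h : P.ProperStep C C') (X : Multiset Q) :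
    P.ProperStep (C + X) (C' + X) := by
  obtain ⟨a, q1, q2, q1', q2', R, h1, h2, rfl, rfl⟩ := h
  exact ⟨a, q1, q2, q1', q2', R + X, h1, h2, add_assoc _ _ _, add_assoc _ _ _⟩

lemma ProperReach.add_right {C C' : Multiset Q} (h : P.ProperReach C C') (X : Multiset Q) :
    P.ProperReach (C + X) (C' + X) :=
  Relation.ReflTransGen.lift (· + X) (fun _ _ hs => hs.add_right X) _ _ h

lemma ProperStep.exists_cons_of_cons {q : Q} (hq : ∀ act q', (q, act, q') ∉ P.E)
    {C D : Multiset Q} (h : P.ProperStep (q ::ₘ C) D) :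
    ∃ D', D = q ::ₘ D' ∧ P.ProperStep C D' := by
  obtain ⟨a, q1, q2, q1', q2', R, h1, h2, hC, rfl⟩ := h
  have hqR : q ∈ R := by
    have hmem : q ∈ {q1, q1'} + R := hC ▸ mem_cons_self q C
    simp only [mem_add, insert_eq_cons, mem_cons, mem_singleton] at hmem
    rcases hmem with (rfl | rfl) | hmem
    · exact absurd h1 (hq _ _)
    · exact absurd h2 (hq _ _)
    · exact hmem
  obtain ⟨R', rfl⟩ := exists_cons_of_mem hqR
  rw [add_cons, cons_inj_right] at hC
  exact ⟨{q2, q2'} + R', add_cons _ _ _, a, q1, q2, q1', q2', R', h1, h2, hC, rfl⟩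

lemma ProperReach.exists_cons_of_cons {q : Q} (hq : ∀ act q', (q, act, q') ∉ P.E)
    {C D : Multiset Q} (h : P.ProperReach (q ::ₘ C) D) :
    ∃ D', D = q ::ₘ D' ∧ P.ProperReach C D' := by
  induction h with
  | refl => exact ⟨C, rfl, .refl⟩
  | tail _ hs ih =>
    obtain ⟨D', rfl, hD'⟩ := ih
    obtain ⟨D'', rfl, hs'⟩ := hs.exists_cons_of_cons hq
    exact ⟨D'', rfl, hD'.tail hs'⟩

lemma glued_zero_zero : P.Glued 0 0 :=
  ⟨0, 0, 0, .refl, .refl⟩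

lemma Glued.forward {C C' D : Multiset Q} (hs : P.ProperStep C C') (h : P.Glued C D) :
    P.Glued C' D := by
  obtain ⟨n, j, k, hfwd, hbwd⟩ := h
  exact ⟨n, j, k, hfwd.tail (hs.add_right _), hbwd⟩

lemma Glued.backward {C D D' : Multiset Q} (hs : P.ProperStep D' D) (h : P.Glued C D) :
    P.Glued C D' := by
  obtain ⟨n, j, k, hfwd, hbwd⟩ := h
  exact ⟨n, j, k, hfwd, hbwd.head (hs.add_right _)⟩

lemma Glued.cons_qi {C D : Multiset Q} (h : P.Glued C D) : P.Glued (P.qi ::ₘ C) D := by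
  obtain ⟨n, j, k, hfwd, hbwd⟩ := h
  refine ⟨n + 1, j, k, ?_, hbwd⟩
  have := hfwd.add_right {P.qi}
  rw [add_comm _ ({P.qi} : Multiset Q), add_comm _ ({P.qi} : Multiset Q), singleton_add,
    singleton_add, ← cons_add] at this
  exact this

lemma Glued.of_cons_qi {C D : Multiset Q} (h : P.Glued C (P.qi ::ₘ D)) : P.Glued C D := by
  obtain ⟨n, j, k, hfwd, hbwd⟩ := h
  exact ⟨n, j + 1, k, hfwd, by rwa [Ci, replicate_succ, add_cons, ← cons_add]⟩

lemma Glued.shift_qf {C D : Multiset Q} {c : ℕ} (h : P.Glued (C + replicate c P.qf) D) :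
    P.Glued C (D + replicate c P.qf) := by
  obtain ⟨n, j, k, hfwd, hbwd⟩ := h
  refine ⟨n, j, c + k, ?_, ?_⟩
  · rwa [replicate_add, ← add_assoc]
  · have := hbwd.add_right (replicate c P.qf)
    rwa [add_right_comm, ← replicate_add, add_comm k] at this

end ProperStep

variable {Q A : Type} [DecidableEq Q] {P : RVNProtocol Q A}

lemma ProperStep.step {C C' : Multiset Q} (h : P.ProperStep C C') : P.Step C C' := by
  obtain ⟨a, q1, q2, q1', q2', R, h1, h2, rfl, rfl⟩ := h
  have hq1 : 0 < count q1 ({q1, q1'} + R) := count_pos.2 (by simp)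
  have hq1' : 0 < count q1' ({q1, q1'} + R) := count_pos.2 (by simp)
  exact ⟨a, q1, q2, q1', q2', h1, h2, hq1, hq1', by omega,
    by rw [add_tsub_cancel_left, add_comm]⟩

lemma ProperReach.reach {C C' : Multiset Q} (h : P.ProperReach C C') : P.Reach C C' :=
  Relation.ReflTransGen.mono (fun _ _ => ProperStep.step) _ _ h

/-- `Step` also allows `q1 = q1'` with a single process in `q1`; that process then splits in two. -/
lemma Step.properStep_or_card_lt {C C' : Multiset Q} (h : P.Step C C') :
    P.ProperStep C C' ∨ C.card < C'.card := by
  obtain ⟨a, q1, q2, q1', q2', h1, h2, -, -, -, rfl⟩ := h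
  by_cases hle : {q1, q1'} ≤ C
  · exact Or.inl ⟨a, q1, q2, q1', q2', C - {q1, q1'}, h1, h2,
      (add_tsub_cancel_of_le hle).symm, add_comm _ _⟩
  · have hlt : C < C - {q1, q1'} + {q1, q1'} :=
      lt_of_le_of_ne le_tsub_add fun h => hle (h ▸ le_add_self)
    right
    simpa using card_lt_card hlt

lemma Reach.properReach_or_card_lt {C C' : Multiset Q} (h : P.Reach C C') :
    P.ProperReach C C' ∨ C.card < C'.card := by
  induction h with
  | refl => exact Or.inl .refl
  | tail _ hs ih =>
    rcases ih with ih | ih <;> rcases hs.properStep_or_card_lt with hs | hs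
    · exact Or.inl (ih.tail hs)
    · exact Or.inr (ih.card_eq ▸ hs)
    · exact Or.inr (hs.card_eq ▸ ih)
    · exact Or.inr (ih.trans hs)

variable (P)

lemma placeR_qf : P.placeR P.qf = Sum.inl P.qf := dif_pos rfl

lemma placeR_eq_inl_iff {q q' : Q} : P.placeR q = Sum.inl q' ↔ q = P.qf ∧ q' = P.qf := by
  unfold placeR
  split_ifs with h <;> simp [h, eq_comm]

lemma placeR_injective : Function.Injective P.placeR := by
  intro q q' h
  unfold placeR at h
  split_ifs at h <;> simp_all

lemma mergedStep_marking_iff {T : Multiset P.MergedPlace} {M' : P.MergedPlace → ℕ} :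
    P.MergedStep (marking T) M' ↔
      M' = marking (Sum.inl P.qi ::ₘ T) ∨
      (∃ (a : A) (q1 q2 q1' q2' : Q) (X : Multiset P.MergedPlace),
        (q1, RVAct.send a, q1') ∈ P.E ∧ (q2, RVAct.recv a, q2') ∈ P.E ∧
        T = ({q1, q2} : Multiset Q).map Sum.inl + X ∧
        M' = marking (({q1', q2'} : Multiset Q).map Sum.inl + X)) ∨
      (∃ X, T = P.placeR P.qi ::ₘ X ∧ M' = marking X) ∨
      (∃ (a : A) (q1 q2 q1' q2' : Q) (X : Multiset P.MergedPlace),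
        (q1, RVAct.send a, q1') ∈ P.E ∧ (q2, RVAct.recv a, q2') ∈ P.E ∧
        T = ({q1', q2'} : Multiset Q).map P.placeR + X ∧
        M' = marking (({q1, q2} : Multiset Q).map P.placeR + X)) := by
  simp only [MergedStep, ← marking_singleton, ← marking_add, marking_le_and_eq_tsub_add_iff,
    marking_le_and_eq_tsub_iff, insert_eq_cons, map_cons, map_singleton, singleton_add,
    exists_and_left]
  rw [add_comm T, singleton_add]

lemma mergedReach_add_map_inl_Ci (n : ℕ) (X : Multiset P.MergedPlace) :
    P.MergedReach (marking X) (marking ((P.Ci n).map Sum.inl + X)) := by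
  induction n with
  | zero =>
    rw [Ci, replicate_zero, map_zero, zero_add]
    exact .refl
  | succ n ih =>
    refine ih.tail (P.mergedStep_marking_iff.2 (Or.inl ?_))
    simp [Ci, replicate_succ]

lemma mergedReach_remove_map_placeR_Ci (n : ℕ) (X : Multiset P.MergedPlace) :
    P.MergedReach (marking ((P.Ci n).map P.placeR + X)) (marking X) := by
  induction n with
  | zero =>
    rw [Ci, replicate_zero, map_zero, zero_add]
    exact .refl
  | succ n ih =>
    refine .head (P.mergedStep_marking_iff.2 (Or.inr (Or.inr (Or.inl
      ⟨(P.Ci n).map P.placeR + X, ?_, rfl⟩)))) ih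
    simp [Ci, replicate_succ]

variable {P}

lemma ProperStep.mergedStep_map_inl {C C' : Multiset Q} (h : P.ProperStep C C')
    (X : Multiset P.MergedPlace) :
    P.MergedStep (marking (C.map Sum.inl + X)) (marking (C'.map Sum.inl + X)) := by
  obtain ⟨a, q1, q2, q1', q2', R, h1, h2, rfl, rfl⟩ := h
  refine P.mergedStep_marking_iff.2 (Or.inr (Or.inl ⟨a, q1', q1, q2', q2, R.map Sum.inl + X,
    h2, h1, ?_, ?_⟩)) <;> rw [pair_comm, map_add, add_assoc]

lemma ProperStep.mergedStep_map_placeR {C C' : Multiset Q} (h : P.ProperStep C C')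
    (X : Multiset P.MergedPlace) :
    P.MergedStep (marking (C'.map P.placeR + X)) (marking (C.map P.placeR + X)) := by
  obtain ⟨a, q1, q2, q1', q2', R, h1, h2, rfl, rfl⟩ := h
  refine P.mergedStep_marking_iff.2 (Or.inr (Or.inr (Or.inr ⟨a, q1', q1, q2', q2,
    R.map P.placeR + X, h2, h1, ?_, ?_⟩))) <;> rw [pair_comm, map_add, add_assoc]

lemma ProperReach.mergedReach_map_inl {C C' : Multiset Q} (h : P.ProperReach C C')
    (X : Multiset P.MergedPlace) :
    P.MergedReach (marking (C.map Sum.inl + X)) (marking (C'.map Sum.inl + X)) :=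
  Relation.ReflTransGen.lift (p := P.MergedStep) (fun C : Multiset Q => marking (C.map Sum.inl + X))
    (fun _ _ hs => hs.mergedStep_map_inl X) _ _ h

lemma ProperReach.mergedReach_map_placeR {C C' : Multiset Q} (h : P.ProperReach C C')
    (X : Multiset P.MergedPlace) :
    P.MergedReach (marking (C'.map P.placeR + X)) (marking (C.map P.placeR + X)) :=
  Relation.ReflTransGen.lift (p := P.MergedStep)
    (fun C : Multiset Q => marking (C.map P.placeR + X))
    (fun _ _ hs => hs.mergedStep_map_placeR X) _ _ h.swap

lemma ProperReach.mergedReach_add_replicate_qf {n : ℕ} (h : P.ProperReach (P.Ci n) (P.Cf n))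
    (X : Multiset P.MergedPlace) :
    P.MergedReach (marking X) (marking (replicate n (Sum.inl P.qf) + X)) := by
  have hrun := (P.mergedReach_add_map_inl_Ci n X).trans (h.mergedReach_map_inl X)
  rwa [Cf, map_replicate] at hrun

lemma ProperReach.mergedReach_remove_replicate_qf {n : ℕ}
    (h : P.ProperReach (P.Ci n) (P.Cf n)) (X : Multiset P.MergedPlace) :
    P.MergedReach (marking (replicate n (Sum.inl P.qf) + X)) (marking X) := by
  have hrun := (h.mergedReach_map_placeR X).trans (P.mergedReach_remove_map_placeR_Ci n X)
  rwa [Cf, map_replicate, placeR_qf] at hrun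

variable (P)

/-- Both `C` and `D` contribute to the shared place `p_{q_f}`, so `(C, D)` is determined by the
marking only up to moving final processes from one to the other (`tokens_add_replicate_qf`). -/
def tokens (C D : Multiset Q) : Multiset P.MergedPlace := C.map Sum.inl + D.map P.placeR

lemma tokens_add_replicate_qf (C D : Multiset Q) (c : ℕ) :
    P.tokens (C + replicate c P.qf) D = P.tokens C (D + replicate c P.qf) := by
  simp only [tokens, map_add, map_replicate, placeR_qf]
  abel

lemma count_inl_tokens {q : Q} (hq : q ≠ P.qf) (C D : Multiset Q) :
    (P.tokens C D).count (Sum.inl q) = C.count q := by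
  rw [tokens, count_add, count_map_eq_count' _ _ Sum.inl_injective, add_eq_left, count_eq_zero]
  simp [placeR_eq_inl_iff, hq]

lemma count_placeR_tokens {C : Multiset Q} (hC : P.qf ∉ C) (q : Q) (D : Multiset Q) :
    (P.tokens C D).count (P.placeR q) = D.count q := by
  rw [tokens, count_add, count_map_eq_count' _ _ P.placeR_injective, add_eq_right, count_eq_zero]
  simp only [mem_map, not_exists, not_and]
  intro c hc hcq
  obtain ⟨-, rfl⟩ := (P.placeR_eq_inl_iff).1 hcq.symm
  exact hC hc

lemma exists_of_tokens_eq_map_inl_add {S C D : Multiset Q} {X : Multiset P.MergedPlace}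
    (hS : P.qf ∉ S) (h : P.tokens C D = S.map Sum.inl + X) :
    ∃ R, C = S + R ∧ X = P.tokens R D := by
  have hSC : S ≤ C := by
    refine le_iff_count.2 fun q => ?_
    by_cases hq : q = P.qf
    · simp [hq, hS]
    · rw [← P.count_inl_tokens hq C D, h, count_add,
        count_map_eq_count' _ _ Sum.inl_injective]
      exact le_self_add
  obtain ⟨R, rfl⟩ := exists_add_of_le hSC
  refine ⟨R, rfl, add_left_cancel (h.symm.trans ?_)⟩
  simp only [tokens, map_add, add_assoc]

lemma exists_of_tokens_eq_map_placeR_add {S C D : Multiset Q} {X : Multiset P.MergedPlace}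
    (hC : P.qf ∉ C) (h : P.tokens C D = S.map P.placeR + X) :
    ∃ R, D = S + R ∧ X = P.tokens C R := by
  have hSD : S ≤ D := by
    refine le_iff_count.2 fun q => ?_
    rw [← P.count_placeR_tokens hC q D, h, count_add,
      count_map_eq_count' _ _ P.placeR_injective]
    exact le_self_add
  obtain ⟨R, rfl⟩ := exists_add_of_le hSD
  refine ⟨R, rfl, add_left_cancel (h.symm.trans ?_)⟩
  simp only [tokens, map_add]
  abel

lemma eq_zero_and_eq_singleton_of_tokens_eq {C D : Multiset Q} (hC : P.qf ∉ C)
    (h : P.tokens C D = {Sum.inl P.qf}) : C = 0 ∧ D = {P.qf} := by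
  have hC0 : C = 0 := eq_zero_of_forall_notMem fun c hc => by
    have hmem : Sum.inl c ∈ P.tokens C D := mem_add.2 (Or.inl (mem_map_of_mem _ hc))
    rw [h, mem_singleton, Sum.inl.injEq] at hmem
    exact hC (hmem ▸ hc)
  subst hC0
  obtain ⟨d, rfl, hd⟩ := map_eq_singleton.1 (by simpa [tokens] using h)
  rw [(P.placeR_eq_inl_iff.1 hd).1]
  exact ⟨rfl, rfl⟩

variable {P}

lemma Glued.exists_qf_notMem {C D : Multiset Q} (h : P.Glued C D) :
    ∃ C' D', P.qf ∉ C' ∧ P.tokens C D = P.tokens C' D' ∧ P.Glued C' D' := by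
  have hsplit : C = C.filter (· ≠ P.qf) + replicate (C.count P.qf) P.qf := by
    rw [← filter_eq', add_comm, filter_add_not]
  refine ⟨C.filter (· ≠ P.qf), D + replicate (C.count P.qf) P.qf, by simp, ?_, ?_⟩
  · rw [← P.tokens_add_replicate_qf, ← hsplit]
  · rw [hsplit] at h
    exact h.shift_qf

/-- Since `q_f` is a sink and `q_f ∉ C`, a forward transition takes its tokens from `C`, while a
reverse transition takes its tokens (also those in `p_{q_f}`) from `D`. -/
lemma Glued.exists_mergedStep (hqf : ∀ (act : RVAct A) (q' : Q), (P.qf, act, q') ∉ P.E)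
    {C D : Multiset Q} {M' : P.MergedPlace → ℕ} (hC : P.qf ∉ C) (h : P.Glued C D)
    (hs : P.MergedStep (marking (P.tokens C D)) M') :
    ∃ C' D', M' = marking (P.tokens C' D') ∧ P.Glued C' D' := by
  rcases P.mergedStep_marking_iff.1 hs with
    rfl | ⟨a, q1, q2, q1', q2', X, h1, h2, hT, rfl⟩ | ⟨X, hT, rfl⟩ |
      ⟨a, q1, q2, q1', q2', X, h1, h2, hT, rfl⟩
  · exact ⟨P.qi ::ₘ C, D, by simp [tokens], h.cons_qi⟩
  · have hS : P.qf ∉ ({q1, q2} : Multiset Q) := by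
      simp only [insert_eq_cons, mem_cons, mem_singleton, not_or]
      exact ⟨fun hq => hqf _ _ (hq ▸ h1), fun hq => hqf _ _ (hq ▸ h2)⟩
    obtain ⟨R, rfl, rfl⟩ := P.exists_of_tokens_eq_map_inl_add hS hT
    refine ⟨{q1', q2'} + R, D, by simp only [tokens, map_add, add_assoc], h.forward ?_⟩
    exact ⟨a, q2, q2', q1, q1', R, h2, h1, by rw [pair_comm], by rw [pair_comm]⟩
  · obtain ⟨R, rfl, rfl⟩ :=
      P.exists_of_tokens_eq_map_placeR_add (S := {P.qi}) hC (by simpa using hT)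
    exact ⟨C, R, rfl, h.of_cons_qi⟩
  · obtain ⟨R, rfl, rfl⟩ := P.exists_of_tokens_eq_map_placeR_add hC hT
    refine ⟨C, {q1, q2} + R, by rw [tokens, tokens, map_add, add_left_comm], h.backward ?_⟩
    exact ⟨a, q2, q2', q1, q1', R, h2, h1, by rw [pair_comm], by rw [pair_comm]⟩

lemma exists_glued_of_mergedReach (hqf : ∀ (act : RVAct A) (q' : Q), (P.qf, act, q') ∉ P.E)
    {M : P.MergedPlace → ℕ} (h : P.MergedReach 0 M) :
    ∃ C D, P.qf ∉ C ∧ M = marking (P.tokens C D) ∧ P.Glued C D := by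
  induction h with
  | refl => exact ⟨0, 0, notMem_zero _, by simp [tokens], glued_zero_zero⟩
  | tail _ hs ih =>
    obtain ⟨C, D, hC, rfl, hCD⟩ := ih
    obtain ⟨C', D', hM', hC'D'⟩ := hCD.exists_mergedStep hqf hC hs
    obtain ⟨C'', D'', hC'', htok, hC''D''⟩ := hC'D'.exists_qf_notMem
    exact ⟨C'', D'', hC'', htok ▸ hM', hC''D''⟩

lemma Glued.exists_consecutive (hqf : ∀ (act : RVAct A) (q' : Q), (P.qf, act, q') ∉ P.E)
    (h : P.Glued 0 {P.qf}) :
    ∃ N, P.Reach (P.Ci N) (P.Cf N) ∧ P.Reach (P.Ci (N + 1)) (P.Cf (N + 1)) := by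
  obtain ⟨n, j, k, hfwd, hbwd⟩ := h
  rw [zero_add] at hfwd
  rw [singleton_add] at hbwd
  obtain rfl : n = k := by simpa [Ci] using hfwd.card_eq.symm
  obtain rfl : n = j + 1 := by simpa [Ci] using hbwd.card_eq
  obtain ⟨D, hD, hrun⟩ := hbwd.exists_cons_of_cons hqf
  rw [replicate_succ, cons_inj_right] at hD
  subst hD
  exact ⟨j, hrun.reach, hfwd.reach⟩

end RVNProtocol

theorem noleader_two_consecutive_iff_reversible_reach_general {Q A : Type}
    [DecidableEq Q] (P : RVNProtocol Q A)
    (hqf : ∀ (act : RVAct A) (q' : Q), (P.qf, act, q') ∉ P.E) :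
    (∃ N : ℕ, P.Reach (P.Ci N) (P.Cf N) ∧ P.Reach (P.Ci (N + 1)) (P.Cf (N + 1))) ↔
    (P.MergedReach (fun _ => 0) (Pi.single (Sum.inl P.qf : P.MergedPlace) 1) ∧
     P.MergedReach (Pi.single (Sum.inl P.qf : P.MergedPlace) 1) (fun _ => 0)) := by
  rw [← marking_singleton, show (fun _ => 0 : P.MergedPlace → ℕ) = marking 0 from
    marking_zero.symm]
  constructor
  · rintro ⟨N, hN, hN1⟩
    have hN := hN.properReach_or_card_lt.resolve_right (by simp [RVNProtocol.Ci, RVNProtocol.Cf])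
    have hN1 :=
      hN1.properReach_or_card_lt.resolve_right (by simp [RVNProtocol.Ci, RVNProtocol.Cf])
    have hsplit : replicate (N + 1) (Sum.inl P.qf) + 0 =
        replicate N (Sum.inl P.qf) + {(Sum.inl P.qf : P.MergedPlace)} := by
      rw [add_zero, replicate_succ, ← singleton_add, add_comm]
    constructor
    · exact (hN1.mergedReach_add_replicate_qf 0).trans
        (hsplit ▸ hN.mergedReach_remove_replicate_qf _)
    · exact (hN.mergedReach_add_replicate_qf _).trans
        (hsplit ▸ hN1.mergedReach_remove_replicate_qf 0)
  · rintro ⟨h, -⟩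
    obtain ⟨C, D, hC, hM, hCD⟩ := RVNProtocol.exists_glued_of_mergedReach hqf h
    obtain ⟨rfl, rfl⟩ := P.eq_zero_and_eq_singleton_of_tokens_eq hC (marking_injective hM).symm
    exact hCD.exists_consecutive hqf

/-- For a rendez-vous protocol with no leader in which no edge has source
`q_f`: there is an `N` with `C_i^{(N)} →* C_f^{(N)}` and `C_i^{(N+1)} →* C_f^{(N+1)}` iff,
in the merged net `N'_P`, the marking `M^{(1)}` (one token in `p_{q_f}`, none elsewhere) is
reachable from the zero marking `M_0` and conversely `M_0` is reachable from `M^{(1)}`. -/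
theorem noleader_two_consecutive_iff_reversible_reach {Q A : Type} [Fintype Q] [Fintype A]
    [DecidableEq Q] (P : RVNProtocol Q A)
    (hqf : ∀ (act : RVAct A) (q' : Q), (P.qf, act, q') ∉ P.E) :
    (∃ N : ℕ, P.Reach (P.Ci N) (P.Cf N) ∧ P.Reach (P.Ci (N + 1)) (P.Cf (N + 1))) ↔
    (P.MergedReach (fun _ => 0) (Pi.single (Sum.inl P.qf : P.MergedPlace) 1) ∧
     P.MergedReach (Pi.single (Sum.inl P.qf : P.MergedPlace) 1) (fun _ => 0)) :=
  noleader_two_consecutive_iff_reversible_reach_general P hqf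
end
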